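/- The operators ξ^ν satisfy the product rule ξ^ν ∘ ξ^μ = Σ_λ c^λ_{μ,ν} ξ^λ, where c^λ_{μ,ν} are the Littlewood–Richardson coefficients. -/

import Mathlib

/-- `Covers μ lam` : `μ` is obtained from `lam` by deleting a single box. -/
def Covers (mu lam : YoungDiagram) : Prop :=
  mu.cells ⊆ lam.cells ∧ lam.cells.card = mu.cells.card + 1

/-- The sum of the contents `j - i` of the boxes of `lam` that are not in `mu`. -/
def remContent (mu lam : YoungDiagram) : ℤ :=
  ∑ c ∈ lam.cells \ mu.cells, ((c.2 : ℤ) - (c.1 : ℤ))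

instance (mu lam : YoungDiagram) : Decidable (Covers mu lam) := by
  unfold Covers; infer_instance

instance : DecidableEq YoungDiagram :=
  fun a b => decidable_of_iff (a.cells = b.cells) (YoungDiagram.ext_iff).symm
/-- The one-row Young diagram `(k)`. -/
def rowYD (k : ℕ) : YoungDiagram := YoungDiagram.ofRowLens [k] (by intro i j _; fin_cases i; fin_cases j; exact le_rfl)

/-- The hook-shaped Young diagram `(r, 1^a)` (for `r ≥ 1`). -/
def hookYD (r a : ℕ) : YoungDiagram where
  cells := ((Finset.range r).image fun j => (0, j)) ∪
    ((Finset.range (a + 1)).image fun i => (i, 0))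
  isLowerSet := by
    intro x y hxy hy
    obtain ⟨h1, h2⟩ : y.1 ≤ x.1 ∧ y.2 ≤ x.2 := Prod.le_def.mp hxy
    simp only [Finset.coe_union, Finset.coe_image, Finset.coe_range, Set.mem_union,
      Set.mem_image, Set.mem_Iio] at hy ⊢
    rcases hy with ⟨j, hj, hje⟩ | ⟨i, hi, hie⟩
    · have hx1 : x.1 = 0 := by rw [← hje]
      have hx2 : x.2 = j := by rw [← hje]
      left
      exact ⟨y.2, by omega, by
        have hy1 : y.1 = 0 := by omega
        rw [Prod.ext_iff]; exact ⟨hy1.symm, rfl⟩⟩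
    · have hx1 : x.1 = i := by rw [← hie]
      have hx2 : x.2 = 0 := by rw [← hie]
      right
      exact ⟨y.1, by omega, by
        have hy2 : y.2 = 0 := by omega
        rw [Prod.ext_iff]; exact ⟨rfl, hy2.symm⟩⟩

/-- `mu / lam` is a horizontal strip: no two of its boxes lie in the same column. -/
def IsHStrip (lam mu : YoungDiagram) : Prop :=
  lam.cells ⊆ mu.cells ∧ ∀ c ∈ mu.cells, c ∉ lam.cells → (c.1 + 1, c.2) ∉ mu.cells

instance (lam mu : YoungDiagram) : Decidable (IsHStrip lam mu) := by
  unfold IsHStrip; infer_instance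

/-- The bosonic operators: `rhoOp xi nabla n` is `ρ⁽ⁿ⁺¹⁾`, defined by `ρ⁽¹⁾ = ξ` and
`ρ⁽ᵏ⁺¹⁾ = (ρ⁽ᵏ⁾∇ - ∇ρ⁽ᵏ⁾)/k`. -/
noncomputable def rhoOp {L : Type*} [CommRing L] [Algebra ℚ L]
    (xi nabla : Module.End ℚ L) : ℕ → Module.End ℚ L
  | 0 => xi
  | n + 1 => ((n : ℚ) + 1)⁻¹ • (rhoOp xi nabla n * nabla - nabla * rhoOp xi nabla n)

/-- The power sum symmetric function `p_k`, via its expansion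
`p_k = Σ_{a=0}^{k-1} (-1)^a s_{(k-a, 1^a)}` into hook Schur functions. -/
noncomputable def pSym {L : Type*} [CommRing L] [Algebra ℚ L]
    (s : Module.Basis YoungDiagram ℚ L) (k : ℕ) : L :=
  ∑ a ∈ Finset.range k, ((-1 : ℚ) ^ a) • s (hookYD (k - a) a)

/-- Evaluation of a polynomial in the variables `p_1, p_2, …` (variable `n` standing
for `p_{n+1}`) on a commuting family of operators. -/
noncomputable def opEval {L : Type*} [CommRing L] [Algebra ℚ L]
    (rho : ℕ → Module.End ℚ L) (P : MvPolynomial ℕ ℚ) : Module.End ℚ L :=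
  ∑ m ∈ P.support, MvPolynomial.coeff m P •
    (((m.support.sort (· ≤ ·)).map fun n => rho n ^ m n).prod)

open Classical in
/-- The (finite) set of Young diagrams with `n` boxes, realized inside the `n × n`
square. -/
noncomputable def diagramsOfSize (n : ℕ) : Finset YoungDiagram :=
  (((Finset.range n ×ˢ Finset.range n).powerset.filter
      (fun t : Finset (ℕ × ℕ) =>
        IsLowerSet (t : Set (ℕ × ℕ)) ∧ t.card = n)).attach).image
    (fun t => ⟨t.1, (Finset.mem_filter.mp t.2).2.1⟩)

namespace XiAux

open Finset

/-! ### Basic combinatorics of diagrams -/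

/-- content of a box -/
def content (b : ℕ × ℕ) : ℤ := (b.2 : ℤ) - (b.1 : ℤ)

lemma mem_hookYD {r a : ℕ} {c : ℕ × ℕ} :
    c ∈ hookYD r a ↔ (c.1 = 0 ∧ c.2 < r) ∨ (c.2 = 0 ∧ c.1 < a + 1) := by
  cases c with
  | mk i j =>
    show (i, j) ∈ (hookYD r a).cells ↔ _
    simp only [hookYD, Finset.mem_union, Finset.mem_image, Finset.mem_range, Prod.mk.injEq]
    constructor
    · rintro (⟨x, hx, h1, h2⟩ | ⟨x, hx, h1, h2⟩)
      · exact Or.inl ⟨h1.symm, by omega⟩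
      · exact Or.inr ⟨h2.symm, by omega⟩
    · rintro (⟨h1, h2⟩ | ⟨h1, h2⟩)
      · exact Or.inl ⟨j, h2, h1.symm, rfl⟩
      · exact Or.inr ⟨i, h2, rfl, h1.symm⟩

lemma mem_rowYD {k : ℕ} {c : ℕ × ℕ} : c ∈ rowYD k ↔ c.1 = 0 ∧ c.2 < k := by
  obtain ⟨i, j⟩ := c
  rw [show ((i, j) ∈ rowYD k) = ∃ h : (i, j).fst < [k].length, (i, j).snd < [k][(i, j).fst] from
    propext YoungDiagram.mem_ofRowLens]
  simp only [List.length_singleton]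
  constructor
  · rintro ⟨h, h2⟩
    have hi : i = 0 := by omega
    subst hi
    simp only [List.getElem_singleton] at h2
    exact ⟨rfl, h2⟩
  · rintro ⟨h1, h2⟩
    have hi : i = 0 := h1
    subst hi
    exact ⟨by omega, by simpa using h2⟩

lemma rowYD_eq_hookYD {r : ℕ} (hr : 1 ≤ r) : rowYD r = hookYD r 0 := by
  ext c
  simp only [YoungDiagram.mem_cells]
  rw [mem_rowYD, mem_hookYD]
  omega

lemma hookYD_one_zero : hookYD 1 0 = rowYD 1 := (rowYD_eq_hookYD le_rfl).symm

lemma card_hookYD {r a : ℕ} (hr : 1 ≤ r) : (hookYD r a).cells.card = r + a := by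
  have : (hookYD r a).cells = ((Finset.range r).image fun j => (0, j)) ∪
      ((Finset.Ioo 0 (a + 1)).image fun i => (i, 0)) := by
    ext c
    rw [YoungDiagram.mem_cells, mem_hookYD]
    simp only [Finset.mem_union, Finset.mem_image, Finset.mem_range, Finset.mem_Ioo,
      Prod.ext_iff]
    constructor
    · rintro (⟨h1, h2⟩ | ⟨h1, h2⟩)
      · exact Or.inl ⟨c.2, h2, h1.symm, rfl⟩
      · rcases Nat.eq_zero_or_pos c.1 with h | h
        · exact Or.inl ⟨0, by omega, h.symm, h1.symm⟩
        · exact Or.inr ⟨c.1, ⟨h, by omega⟩, rfl, h1.symm⟩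
    · rintro (⟨x, hx, h1, h2⟩ | ⟨x, hx, h1, h2⟩)
      · exact Or.inl ⟨h1.symm, by omega⟩
      · exact Or.inr ⟨h2.symm, by omega⟩
  rw [this, Finset.card_union_of_disjoint, Finset.card_image_of_injective,
    Finset.card_image_of_injective]
  · simp [Nat.card_Ioo]
  · intro x y h; simpa using (Prod.ext_iff.mp h).1
  · intro x y h; simpa using (Prod.ext_iff.mp h).2
  · rw [Finset.disjoint_left]
    rintro ⟨i, j⟩ h1 h2
    simp only [Finset.mem_image, Finset.mem_range, Finset.mem_Ioo, Prod.mk.injEq] at h1 h2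
    obtain ⟨x, hx, hx1, hx2⟩ := h1
    obtain ⟨y, hy, hy1, hy2⟩ := h2
    omega

lemma card_rowYD (k : ℕ) : (rowYD k).cells.card = k := by
  have : (rowYD k).cells = (Finset.range k).image fun j => (0, j) := by
    ext c
    rw [YoungDiagram.mem_cells, mem_rowYD]
    simp only [Finset.mem_image, Finset.mem_range, Prod.ext_iff]
    constructor
    · rintro ⟨h1, h2⟩; exact ⟨c.2, h2, h1.symm, rfl⟩
    · rintro ⟨x, hx, h1, h2⟩; exact ⟨h1.symm, by omega⟩
  rw [this, Finset.card_image_of_injective, Finset.card_range]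
  intro x y h; simpa using (Prod.ext_iff.mp h).2

lemma hookYD_succ_ne {r a : ℕ} (hr : 1 ≤ r) : hookYD (r + 1) a ≠ hookYD r (a + 1) := by
  intro h
  have h1 : ((0 : ℕ), r) ∈ hookYD (r + 1) a := mem_hookYD.mpr (Or.inl ⟨rfl, by omega⟩)
  rw [h] at h1
  have := mem_hookYD.mp h1
  simp only at this
  omega

lemma cell_lt_card {μ : YoungDiagram} {c : ℕ × ℕ} (h : c ∈ μ) :
    c.1 < μ.cells.card ∧ c.2 < μ.cells.card := by
  constructor
  · have hsub : (Finset.range (c.1 + 1)).image (fun i => (i, c.2)) ⊆ μ.cells := by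
      intro x hx
      simp only [Finset.mem_image, Finset.mem_range] at hx
      obtain ⟨i, hi, rfl⟩ := hx
      exact (YoungDiagram.mem_cells _).mpr (μ.up_left_mem (by omega) le_rfl h)
    have := Finset.card_le_card hsub
    rw [Finset.card_image_of_injective, Finset.card_range] at this
    · omega
    · intro x y hxy; simpa using (Prod.ext_iff.mp hxy).1
  · have hsub : (Finset.range (c.2 + 1)).image (fun j => (c.1, j)) ⊆ μ.cells := by
      intro x hx
      simp only [Finset.mem_image, Finset.mem_range] at hx
      obtain ⟨j, hj, rfl⟩ := hx
      exact (YoungDiagram.mem_cells _).mpr (μ.up_left_mem le_rfl (by omega) h)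
    have := Finset.card_le_card hsub
    rw [Finset.card_image_of_injective, Finset.card_range] at this
    · omega
    · intro x y hxy; simpa using (Prod.ext_iff.mp hxy).2

lemma mem_diagramsOfSize {n : ℕ} {μ : YoungDiagram} :
    μ ∈ diagramsOfSize n ↔ μ.cells.card = n := by
  classical
  constructor
  · intro h
    rw [diagramsOfSize, Finset.mem_image] at h
    obtain ⟨t, _, ht⟩ := h
    have := (Finset.mem_filter.mp t.2).2.2
    rw [← ht]
    exact this
  · intro h
    rw [diagramsOfSize, Finset.mem_image]
    refine ⟨⟨μ.cells, ?_⟩, Finset.mem_attach _ _, rfl⟩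
    rw [Finset.mem_filter, Finset.mem_powerset]
    refine ⟨?_, μ.isLowerSet, h⟩
    intro c hc
    have := cell_lt_card ((YoungDiagram.mem_cells c).mp hc)
    rw [h] at this
    simp only [Finset.mem_product, Finset.mem_range]
    exact this

/-! ### Covers -/

lemma covers_sdiff {mu lam : YoungDiagram} (h : Covers mu lam) :
    ∃ b, lam.cells \ mu.cells = {b} := by
  rw [← Finset.card_eq_one, Finset.card_sdiff_of_subset h.1, h.2]
  omega

lemma covers_insert {mu lam : YoungDiagram} (h : Covers mu lam) {b : ℕ × ℕ}
    (hb : lam.cells \ mu.cells = {b}) :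
    b ∈ lam ∧ b ∉ mu ∧ lam.cells = insert b mu.cells ∧ remContent mu lam = content b := by
  have hbmem : b ∈ lam.cells \ mu.cells := by rw [hb]; exact Finset.mem_singleton_self b
  rw [Finset.mem_sdiff] at hbmem
  refine ⟨(YoungDiagram.mem_cells b).mp hbmem.1, fun hc => hbmem.2 ((YoungDiagram.mem_cells b).mpr hc), ?_, ?_⟩
  · ext x
    simp only [Finset.mem_insert]
    constructor
    · intro hx
      by_cases hxm : x ∈ mu.cells
      · exact Or.inr hxm
      · left
        have : x ∈ lam.cells \ mu.cells := Finset.mem_sdiff.mpr ⟨hx, hxm⟩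
        rw [hb] at this
        exact Finset.mem_singleton.mp this
    · rintro (rfl | hx)
      · exact hbmem.1
      · exact h.1 hx
  · rw [remContent, hb, Finset.sum_singleton]; rfl

lemma covers_iff_hstrip {mu lam : YoungDiagram} :
    Covers mu lam ↔ (lam.cells.card = mu.cells.card + 1 ∧ IsHStrip mu lam) := by
  constructor
  · intro h
    obtain ⟨b, hb⟩ := covers_sdiff h
    obtain ⟨hb1, hb2, hb3, _⟩ := covers_insert h hb
    refine ⟨h.2, h.1, ?_⟩
    intro c hc hcm
    have hcb : c = b := by
      have : c ∈ lam.cells \ mu.cells := Finset.mem_sdiff.mpr ⟨hc, hcm⟩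
      rw [hb] at this
      exact Finset.mem_singleton.mp this
    subst hcb
    intro hdn
    have hdm : (c.1 + 1, c.2) ∈ mu.cells ∨ (c.1 + 1, c.2) = c := by
      rw [hb3] at hdn
      rcases Finset.mem_insert.mp hdn with h' | h'
      · exact Or.inr h'
      · exact Or.inl h'
    rcases hdm with h' | h'
    · exact hcm ((YoungDiagram.mem_cells c).mpr
        (mu.up_left_mem (Nat.le_succ _) le_rfl ((YoungDiagram.mem_cells _).mp h')))
    · have := (Prod.ext_iff.mp h').1
      omega
  · rintro ⟨h1, h2⟩
    exact ⟨h2.1, h1⟩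

/-! ### Adding and removing boxes -/

/-- `b` is a removable (outer) corner of `lam`. -/
def RemP (lam : YoungDiagram) (b : ℕ × ℕ) : Prop :=
  b ∈ lam ∧ (b.1 + 1, b.2) ∉ lam ∧ (b.1, b.2 + 1) ∉ lam

/-- `b` is an addable (co-)corner of `mu`. -/
def AddP (mu : YoungDiagram) (b : ℕ × ℕ) : Prop :=
  b ∉ mu ∧ (b.1 = 0 ∨ (b.1 - 1, b.2) ∈ mu) ∧ (b.2 = 0 ∨ (b.1, b.2 - 1) ∈ mu)

instance (lam : YoungDiagram) (b : ℕ × ℕ) : Decidable (RemP lam b) := by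
  unfold RemP; infer_instance

instance (mu : YoungDiagram) (b : ℕ × ℕ) : Decidable (AddP mu b) := by
  unfold AddP; infer_instance

/-- Erase a removable corner. -/
def eraseYD (lam : YoungDiagram) (b : ℕ × ℕ) : YoungDiagram :=
  if h : RemP lam b then
    ⟨lam.cells.erase b, by
      intro x y hxy hx
      simp only [coe_erase, Set.mem_diff, mem_coe, YoungDiagram.mem_cells,
        Set.mem_singleton_iff] at hx ⊢
      constructor
      · exact lam.isLowerSet hxy hx.1
      · rintro rfl
        obtain ⟨hy1, hy2⟩ := Prod.le_def.mp hxy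
        rcases Nat.lt_or_ge y.1 x.1 with h1 | h1
        · exact h.2.1 (lam.isLowerSet (Prod.le_def.mpr ⟨by omega, by omega⟩) hx.1)
        · rcases Nat.lt_or_ge y.2 x.2 with h2 | h2
          · exact h.2.2 (lam.isLowerSet (Prod.le_def.mpr ⟨by omega, by omega⟩) hx.1)
          · exact hx.2 (Prod.ext (by omega) (by omega)).symm⟩
  else lam

/-- Insert an addable corner. -/
def insertYD (mu : YoungDiagram) (b : ℕ × ℕ) : YoungDiagram :=
  if h : AddP mu b then
    ⟨insert b mu.cells, by
      intro x y hxy hx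
      simp only [coe_insert, Set.mem_insert_iff, mem_coe, YoungDiagram.mem_cells] at hx ⊢
      obtain ⟨hy1, hy2⟩ := Prod.le_def.mp hxy
      rcases hx with rfl | hx
      · rcases Nat.lt_or_ge y.1 x.1 with h1 | h1
        · right
          have hx1 : (x.1 - 1, x.2) ∈ mu := (h.2.1).resolve_left (by omega)
          exact mu.isLowerSet (Prod.le_def.mpr ⟨by omega, by omega⟩) hx1
        · rcases Nat.lt_or_ge y.2 x.2 with h2 | h2
          · right
            have hx2 : (x.1, x.2 - 1) ∈ mu := (h.2.2).resolve_left (by omega)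
            exact mu.isLowerSet (Prod.le_def.mpr ⟨by omega, by omega⟩) hx2
          · left; exact (Prod.ext (by omega) (by omega))
      · right; exact mu.isLowerSet hxy hx⟩
  else mu

lemma cells_eraseYD {lam : YoungDiagram} {b : ℕ × ℕ} (h : RemP lam b) :
    (eraseYD lam b).cells = lam.cells.erase b := by
  rw [eraseYD, dif_pos h]

lemma cells_insertYD {mu : YoungDiagram} {b : ℕ × ℕ} (h : AddP mu b) :
    (insertYD mu b).cells = insert b mu.cells := by
  rw [insertYD, dif_pos h]

lemma covers_eraseYD {lam : YoungDiagram} {b : ℕ × ℕ} (h : RemP lam b) :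
    Covers (eraseYD lam b) lam := by
  have hc := cells_eraseYD h
  have hbm : b ∈ lam.cells := (YoungDiagram.mem_cells b).mpr h.1
  constructor
  · rw [hc]; exact Finset.erase_subset _ _
  · rw [hc, Finset.card_erase_of_mem hbm]
    have : 0 < lam.cells.card := Finset.card_pos.mpr ⟨b, hbm⟩
    omega

lemma covers_insertYD {mu : YoungDiagram} {b : ℕ × ℕ} (h : AddP mu b) :
    Covers mu (insertYD mu b) := by
  have hc := cells_insertYD h
  have hbm : b ∉ mu.cells := fun hx => h.1 ((YoungDiagram.mem_cells b).mp hx)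
  constructor
  · rw [hc]; exact Finset.subset_insert _ _
  · rw [hc, Finset.card_insert_of_notMem hbm]

lemma covers_exists_erase {mu lam : YoungDiagram} (h : Covers mu lam) :
    ∃ b, b ∈ lam ∧ b ∉ mu ∧ RemP lam b ∧ mu = eraseYD lam b ∧
      remContent mu lam = content b := by
  obtain ⟨b, hb⟩ := covers_sdiff h
  obtain ⟨hb1, hb2, hb3, hb4⟩ := covers_insert h hb
  have hnotmem : ∀ d : ℕ × ℕ, b ≤ d → b ≠ d → d ∉ lam := by
    intro d hled hne hd
    have hdm : d ∈ mu.cells ∨ d = b := by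
      have : d ∈ lam.cells := (YoungDiagram.mem_cells d).mpr hd
      rw [hb3] at this
      rcases Finset.mem_insert.mp this with h' | h'
      · exact Or.inr h'
      · exact Or.inl h'
    rcases hdm with h' | h'
    · exact hb2 (mu.up_left_mem hled.1 hled.2 ((YoungDiagram.mem_cells d).mp h'))
    · exact hne h'.symm
  have hrem : RemP lam b := by
    refine ⟨hb1, ?_, ?_⟩
    · exact hnotmem _ (Prod.le_def.mpr ⟨Nat.le_succ _, le_rfl⟩)
        (fun hx => by have := (Prod.ext_iff.mp hx).1; omega)
    · exact hnotmem _ (Prod.le_def.mpr ⟨le_rfl, Nat.le_succ _⟩)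
        (fun hx => by have := (Prod.ext_iff.mp hx).2; omega)
  refine ⟨b, hb1, hb2, hrem, ?_, hb4⟩
  apply YoungDiagram.ext
  rw [cells_eraseYD hrem, hb3, Finset.erase_insert]
  intro hx
  exact hb2 ((YoungDiagram.mem_cells b).mp hx)

lemma covers_exists_insert {mu lam : YoungDiagram} (h : Covers mu lam) :
    ∃ b, b ∈ lam ∧ b ∉ mu ∧ AddP mu b ∧ lam = insertYD mu b ∧
      remContent mu lam = content b := by
  obtain ⟨b, hb⟩ := covers_sdiff h
  obtain ⟨hb1, hb2, hb3, hb4⟩ := covers_insert h hb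
  have hmem : ∀ d : ℕ × ℕ, d ≤ b → d ≠ b → d ∈ mu := by
    intro d hled hne
    have hdl : d ∈ lam := lam.up_left_mem hled.1 hled.2 hb1
    have : d ∈ lam.cells := (YoungDiagram.mem_cells d).mpr hdl
    rw [hb3] at this
    rcases Finset.mem_insert.mp this with h' | h'
    · exact absurd h' hne
    · exact (YoungDiagram.mem_cells d).mp h'
  have hadd : AddP mu b := by
    refine ⟨hb2, ?_, ?_⟩
    · rcases Nat.eq_zero_or_pos b.1 with h0 | h0
      · exact Or.inl h0
      · exact Or.inr (hmem _ (Prod.le_def.mpr ⟨Nat.sub_le _ _, le_rfl⟩)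
          (fun hx => by have := (Prod.ext_iff.mp hx).1; omega))
    · rcases Nat.eq_zero_or_pos b.2 with h0 | h0
      · exact Or.inl h0
      · exact Or.inr (hmem _ (Prod.le_def.mpr ⟨le_rfl, Nat.sub_le _ _⟩)
          (fun hx => by have := (Prod.ext_iff.mp hx).2; omega))
  refine ⟨b, hb1, hb2, hadd, ?_, hb4⟩
  apply YoungDiagram.ext
  rw [cells_insertYD hadd, hb3]

lemma eraseYD_box_unique {lam : YoungDiagram} {b b' : ℕ × ℕ} (h : RemP lam b)
    (h' : RemP lam b') (he : eraseYD lam b = eraseYD lam b') : b = b' := by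
  have hc : lam.cells.erase b = lam.cells.erase b' := by
    rw [← cells_eraseYD h, ← cells_eraseYD h', he]
  by_contra hne
  have : b' ∈ lam.cells.erase b :=
    Finset.mem_erase.mpr ⟨fun hx => hne hx.symm, (YoungDiagram.mem_cells b').mpr h'.1⟩
  rw [hc] at this
  exact (Finset.mem_erase.mp this).1 rfl

lemma insertYD_box_unique {mu : YoungDiagram} {b b' : ℕ × ℕ} (h : AddP mu b)
    (h' : AddP mu b') (he : insertYD mu b = insertYD mu b') : b = b' := by
  have hc : insert b mu.cells = insert b' mu.cells := by
    rw [← cells_insertYD h, ← cells_insertYD h', he]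
  have : b ∈ insert b' mu.cells := by
    rw [← hc]; exact Finset.mem_insert_self _ _
  rcases Finset.mem_insert.mp this with h1 | h1
  · exact h1
  · exact absurd ((YoungDiagram.mem_cells b).mp h1) h.1

lemma remContent_eraseYD {lam : YoungDiagram} {b : ℕ × ℕ} (h : RemP lam b) :
    remContent (eraseYD lam b) lam = content b := by
  have : lam.cells \ (eraseYD lam b).cells = {b} := by
    rw [cells_eraseYD h]
    ext x
    simp only [Finset.mem_sdiff, Finset.mem_erase, Finset.mem_singleton]
    constructor
    · rintro ⟨hx1, hx2⟩
      by_contra hne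
      exact hx2 ⟨hne, hx1⟩
    · rintro rfl
      exact ⟨(YoungDiagram.mem_cells x).mpr h.1, fun hx => hx.1 rfl⟩
  rw [remContent, this, Finset.sum_singleton]; rfl

lemma remContent_insertYD {mu : YoungDiagram} {b : ℕ × ℕ} (h : AddP mu b) :
    remContent mu (insertYD mu b) = content b := by
  have hbm : b ∉ mu.cells := fun hx => h.1 ((YoungDiagram.mem_cells b).mp hx)
  have : (insertYD mu b).cells \ mu.cells = {b} := by
    rw [cells_insertYD h]
    ext x
    simp only [Finset.mem_sdiff, Finset.mem_insert, Finset.mem_singleton]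
    constructor
    · rintro ⟨hx1 | hx1, hx2⟩
      · exact hx1
      · exact absurd hx1 hx2
    · rintro rfl
      exact ⟨Or.inl rfl, hbm⟩
  rw [remContent, this, Finset.sum_singleton]; rfl

lemma card_eraseYD {lam : YoungDiagram} {b : ℕ × ℕ} (h : RemP lam b) :
    (eraseYD lam b).cells.card + 1 = lam.cells.card := by
  exact (covers_eraseYD h).2.symm

lemma card_insertYD {mu : YoungDiagram} {b : ℕ × ℕ} (h : AddP mu b) :
    (insertYD mu b).cells.card = mu.cells.card + 1 := by
  exact (covers_insertYD h).2

section Core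

variable {mu lam : YoungDiagram}

/-- auxiliary condition: after erasing `b` from `lam`, the skew with `mu` is a horizontal
strip. -/
def Hm (mu lam : YoungDiagram) (b : ℕ × ℕ) : Prop :=
  ∀ c ∈ lam.cells \ mu.cells, c ≠ b → ((c.1 + 1, c.2) ∉ lam ∨ (c.1 + 1, c.2) = b)

def Hp (mu lam : YoungDiagram) (b : ℕ × ℕ) : Prop :=
  ∀ c ∈ lam.cells \ mu.cells, c ≠ b → (c.1 + 1, c.2) ∉ lam

lemma hstrip_iff_bad_empty (hsub : mu.cells ⊆ lam.cells) :
    IsHStrip mu lam ↔ ∀ c ∈ lam.cells \ mu.cells, (c.1 + 1, c.2) ∉ lam := by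
  constructor
  · intro h c hc
    rw [Finset.mem_sdiff] at hc
    intro hd
    exact h.2 c hc.1 hc.2 ((YoungDiagram.mem_cells _).mpr hd)
  · intro h
    refine ⟨hsub, fun c hc hcm hd => ?_⟩
    exact h c (Finset.mem_sdiff.mpr ⟨hc, hcm⟩) ((YoungDiagram.mem_cells _).mp hd)

lemma lhs_cond_iff (hsub : mu.cells ⊆ lam.cells) (r : ℕ)
    (hcard : lam.cells.card = mu.cells.card + (r + 1)) {b : ℕ × ℕ}
    (hb : b ∈ lam.cells \ mu.cells) :
    (RemP lam b ∧ (eraseYD lam b).cells.card = mu.cells.card + r ∧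
        IsHStrip mu (eraseYD lam b)) ↔ (RemP lam b ∧ Hm mu lam b) := by
  rw [Finset.mem_sdiff] at hb
  constructor
  · rintro ⟨h1, _, h3⟩
    refine ⟨h1, ?_⟩
    intro c hc hcb
    rw [Finset.mem_sdiff] at hc
    by_cases hd : (c.1 + 1, c.2) = b
    · exact Or.inr hd
    · left
      intro hdl
      have hcm : c ∈ (eraseYD lam b).cells := by
        rw [cells_eraseYD h1, Finset.mem_erase]; exact ⟨hcb, hc.1⟩
      have hdm : (c.1 + 1, c.2) ∈ (eraseYD lam b).cells := by
        rw [cells_eraseYD h1, Finset.mem_erase]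
        exact ⟨hd, (YoungDiagram.mem_cells _).mpr hdl⟩
      exact h3.2 c hcm hc.2 hdm
  · rintro ⟨h1, h2⟩
    have hce := cells_eraseYD h1
    refine ⟨h1, ?_, ?_, ?_⟩
    · have := card_eraseYD h1; omega
    · rw [hce]
      intro x hx
      exact Finset.mem_erase.mpr ⟨fun he => hb.2 (he ▸ hx), hsub hx⟩
    · intro c hc hcm hd
      rw [hce, Finset.mem_erase] at hc hd
      rcases h2 c (Finset.mem_sdiff.mpr ⟨hc.2, hcm⟩) hc.1 with h' | h'
      · exact h' ((YoungDiagram.mem_cells _).mp hd.2)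
      · exact hd.1 h'

lemma rhs_cond_iff (hsub : mu.cells ⊆ lam.cells) (r : ℕ)
    (hcard : lam.cells.card = mu.cells.card + (r + 1)) {b : ℕ × ℕ}
    (hb : b ∈ lam.cells \ mu.cells) :
    (AddP mu b ∧ lam.cells.card = (insertYD mu b).cells.card + r ∧
        IsHStrip (insertYD mu b) lam) ↔ (AddP mu b ∧ Hp mu lam b) := by
  rw [Finset.mem_sdiff] at hb
  constructor
  · rintro ⟨h1, _, h3⟩
    refine ⟨h1, ?_⟩
    intro c hc hcb hd
    rw [Finset.mem_sdiff] at hc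
    have hcm : c ∉ (insertYD mu b).cells := by
      rw [cells_insertYD h1, Finset.mem_insert]
      rintro (rfl | hx)
      · exact hcb rfl
      · exact hc.2 hx
    exact h3.2 c hc.1 hcm ((YoungDiagram.mem_cells _).mpr hd)
  · rintro ⟨h1, h2⟩
    have hci := cells_insertYD h1
    refine ⟨h1, ?_, ?_, ?_⟩
    · have := card_insertYD h1; omega
    · rw [hci]
      intro x hx
      rcases Finset.mem_insert.mp hx with rfl | hx
      · exact hb.1
      · exact hsub hx
    · intro c hc hcm hd
      rw [hci, Finset.mem_insert] at hcm
      push_neg at hcm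
      exact h2 c (Finset.mem_sdiff.mpr ⟨hc, hcm.2⟩) hcm.1 ((YoungDiagram.mem_cells _).mp hd)

/-- The central combinatorial identity: the Leibniz rule for the content-raising operator
against multiplication by a complete homogeneous symmetric function, in box form. -/
lemma core_identity (mu lam : YoungDiagram) (r : ℕ) :
    (∑ b ∈ lam.cells \ mu.cells,
      if RemP lam b ∧ (eraseYD lam b).cells.card = mu.cells.card + r ∧
          IsHStrip mu (eraseYD lam b)
      then (content b : ℚ) + 1 else 0)
    = (if lam.cells.card = mu.cells.card + (r + 1) ∧ IsHStrip mu lam then (r + 1 : ℚ) else 0)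
    + ∑ b ∈ lam.cells \ mu.cells,
      if AddP mu b ∧ lam.cells.card = (insertYD mu b).cells.card + r ∧
          IsHStrip (insertYD mu b) lam
      then (content b : ℚ) else 0 := by
  classical
  by_cases hsub : mu.cells ⊆ lam.cells
  swap
  · rw [Finset.sum_eq_zero, Finset.sum_eq_zero, if_neg]
    · ring
    · rintro ⟨_, h⟩; exact hsub h.1
    · intro b _
      rw [if_neg]
      rintro ⟨hA, _, h3⟩
      exact hsub (fun x hx => h3.1 (by
        rw [cells_insertYD hA]; exact Finset.mem_insert_of_mem hx))
    · intro b _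
      rw [if_neg]
      rintro ⟨hR, _, h3⟩
      exact hsub (fun x hx => Finset.mem_of_mem_erase (by
        rw [← cells_eraseYD hR]; exact h3.1 hx))
  by_cases hcard : lam.cells.card = mu.cells.card + (r + 1)
  swap
  · rw [Finset.sum_eq_zero, Finset.sum_eq_zero, if_neg]
    · ring
    · rintro ⟨h, _⟩; exact hcard h
    · intro b hb
      rw [Finset.mem_sdiff] at hb
      rw [if_neg]
      rintro ⟨hA, h2, _⟩
      rw [card_insertYD hA] at h2
      omega
    · intro b hb
      rw [Finset.mem_sdiff] at hb
      rw [if_neg]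
      rintro ⟨hR, h2, _⟩
      have := card_eraseYD hR
      omega
  -- main case
  have hNcard : (lam.cells \ mu.cells).card = r + 1 := by
    rw [Finset.card_sdiff_of_subset hsub]; omega
  -- rewrite the two sums using the simplified conditions
  have e1 : (∑ b ∈ lam.cells \ mu.cells,
      if RemP lam b ∧ (eraseYD lam b).cells.card = mu.cells.card + r ∧
          IsHStrip mu (eraseYD lam b)
      then (content b : ℚ) + 1 else 0)
      = ∑ b ∈ lam.cells \ mu.cells,
        if RemP lam b ∧ Hm mu lam b then (content b : ℚ) + 1 else 0 :=
    Finset.sum_congr rfl (fun b hb => if_congr (lhs_cond_iff hsub r hcard hb) rfl rfl)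
  have e2 : (∑ b ∈ lam.cells \ mu.cells,
      if AddP mu b ∧ lam.cells.card = (insertYD mu b).cells.card + r ∧
          IsHStrip (insertYD mu b) lam
      then (content b : ℚ) else 0)
      = ∑ b ∈ lam.cells \ mu.cells,
        if AddP mu b ∧ Hp mu lam b then (content b : ℚ) else 0 :=
    Finset.sum_congr rfl (fun b hb => if_congr (rhs_cond_iff hsub r hcard hb) rfl rfl)
  rw [e1, e2]
  set New := lam.cells \ mu.cells with hNew
  set Bad := New.filter (fun c => (c.1 + 1, c.2) ∈ lam) with hBad
  have hmemNew : ∀ {c : ℕ × ℕ}, c ∈ New → c ∈ lam ∧ c ∉ mu := by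
    intro c hc
    rw [hNew, Finset.mem_sdiff] at hc
    exact ⟨(YoungDiagram.mem_cells _).mp hc.1, fun h => hc.2 ((YoungDiagram.mem_cells _).mpr h)⟩
  have hNewOfMem : ∀ {c : ℕ × ℕ}, c ∈ lam → c ∉ mu → c ∈ New := by
    intro c h1 h2
    rw [hNew, Finset.mem_sdiff]
    exact ⟨(YoungDiagram.mem_cells _).mpr h1, fun h => h2 ((YoungDiagram.mem_cells _).mp h)⟩
  by_cases hB : Bad = ∅
  · -- horizontal strip case
    have hstrip : IsHStrip mu lam := by
      rw [hstrip_iff_bad_empty hsub]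
      intro c hc hd
      have : c ∈ Bad := by
        rw [hBad, Finset.mem_filter]; exact ⟨hc, hd⟩
      rw [hB] at this
      exact absurd this (Finset.notMem_empty c)
    have hnotbad : ∀ {c : ℕ × ℕ}, c ∈ New → (c.1 + 1, c.2) ∉ lam := by
      intro c hc hd
      have : c ∈ Bad := by rw [hBad, Finset.mem_filter]; exact ⟨hc, hd⟩
      rw [hB] at this
      exact absurd this (Finset.notMem_empty c)
    rw [if_pos ⟨hcard, hstrip⟩]
    -- simplify LHS condition : RemP ∧ Hm ↔ right ∉ lam; and right ∈ lam ↔ right ∈ New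
    have hL : ∀ b ∈ New, (if RemP lam b ∧ Hm mu lam b then (content b : ℚ) + 1 else 0)
        = (if (b.1, b.2 + 1) ∈ New then 0 else (content b : ℚ) + 1) := by
      intro b hb
      obtain ⟨hbl, hbm⟩ := hmemNew hb
      by_cases hr : (b.1, b.2 + 1) ∈ New
      · rw [if_neg, if_pos hr]
        rintro ⟨hR, _⟩
        exact hR.2.2 (hmemNew hr).1
      · rw [if_pos, if_neg hr]
        refine ⟨⟨hbl, hnotbad hb, fun hrl => ?_⟩, fun c hc hcb => Or.inl (hnotbad hc)⟩
        exact hr (hNewOfMem hrl (fun hrm => hbm (mu.up_left_mem le_rfl (Nat.le_succ _) hrm)))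
    have hR : ∀ b ∈ New, (if AddP mu b ∧ Hp mu lam b then (content b : ℚ) else 0)
        = (if b.2 ≠ 0 ∧ (b.1, b.2 - 1) ∈ New then 0 else (content b : ℚ)) := by
      intro b hb
      obtain ⟨hbl, hbm⟩ := hmemNew hb
      by_cases hlft : b.2 ≠ 0 ∧ (b.1, b.2 - 1) ∈ New
      · rw [if_neg, if_pos hlft]
        rintro ⟨hA, _⟩
        rcases hA.2.2 with h0 | h0
        · exact hlft.1 h0
        · exact (hmemNew hlft.2).2 h0
      · rw [if_pos, if_neg hlft]
        push_neg at hlft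
        constructor
        · refine ⟨hbm, ?_, ?_⟩
          · -- vertical condition automatic
            rcases Nat.eq_zero_or_pos b.1 with h0 | h0
            · exact Or.inl h0
            · right
              have hup : (b.1 - 1, b.2) ∈ lam := lam.up_left_mem (Nat.sub_le _ _) le_rfl hbl
              by_contra hupm
              have hupNew : (b.1 - 1, b.2) ∈ New := hNewOfMem hup hupm
              have : (b.1 - 1 + 1, b.2) ∈ lam := by
                have : b.1 - 1 + 1 = b.1 := by omega
                rw [this]; exact hbl
              exact hnotbad hupNew this
          · rcases Nat.eq_zero_or_pos b.2 with h0 | h0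
            · exact Or.inl h0
            · right
              have hlf : (b.1, b.2 - 1) ∈ lam := lam.up_left_mem le_rfl (Nat.sub_le _ _) hbl
              by_contra hlm
              exact (hlft (by omega)) (hNewOfMem hlf hlm)
        · intro c hc hcb
          exact hnotbad hc
    rw [Finset.sum_congr rfl hL, Finset.sum_congr rfl hR]
    -- now a telescoping / bijection argument
    have key : ∑ b ∈ New, (if (b.1, b.2 + 1) ∈ New then ((content b : ℚ) + 1) else 0)
        = ∑ b ∈ New, (if b.2 ≠ 0 ∧ (b.1, b.2 - 1) ∈ New then (content b : ℚ) else 0) := by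
      rw [← Finset.sum_filter, ← Finset.sum_filter]
      apply Finset.sum_nbij' (fun b => (b.1, b.2 + 1)) (fun b => (b.1, b.2 - 1))
      · intro a ha
        rw [Finset.mem_filter] at ha ⊢
        refine ⟨ha.2, by omega, ?_⟩
        simpa using ha.1
      · intro a ha
        rw [Finset.mem_filter] at ha ⊢
        obtain ⟨h1, h2, h3⟩ := ha
        refine ⟨h3, ?_⟩
        have : (a.1, a.2 - 1 + 1) = a := by
          rw [Prod.ext_iff]; constructor <;> simp <;> omega
        rw [this]
        exact h1
      · intro a ha; simp
      · intro a ha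
        rw [Finset.mem_filter] at ha
        rw [Prod.ext_iff]
        constructor <;> simp <;> omega
      · intro a ha
        simp only [content]
        push_cast
        ring
    have expand1 : ∀ b ∈ New, (if (b.1, b.2 + 1) ∈ New then 0 else (content b : ℚ) + 1)
        = ((content b : ℚ) + 1) - (if (b.1, b.2 + 1) ∈ New then ((content b : ℚ) + 1) else 0) := by
      intro b _
      by_cases h : (b.1, b.2 + 1) ∈ New <;> simp [h]
    have expand2 : ∀ b ∈ New, (if b.2 ≠ 0 ∧ (b.1, b.2 - 1) ∈ New then 0 else (content b : ℚ))
        = (content b : ℚ) - (if b.2 ≠ 0 ∧ (b.1, b.2 - 1) ∈ New then (content b : ℚ) else 0) := by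
      intro b _
      by_cases h : b.2 ≠ 0 ∧ (b.1, b.2 - 1) ∈ New <;> simp [h]
    rw [Finset.sum_congr rfl expand1, Finset.sum_congr rfl expand2,
      Finset.sum_sub_distrib, Finset.sum_sub_distrib, key]
    have : ∑ b ∈ New, ((content b : ℚ) + 1) = (∑ b ∈ New, (content b : ℚ)) + (r + 1) := by
      rw [Finset.sum_add_distrib, Finset.sum_const, hNcard]
      push_cast
      ring
    rw [this]
    ring
  · -- not a horizontal strip
    have hBne : Bad.Nonempty := Finset.nonempty_of_ne_empty hB
    obtain ⟨d, hd⟩ := hBne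
    have hdNew : d ∈ New := (Finset.mem_filter.mp hd).1
    have hdBadl : (d.1 + 1, d.2) ∈ lam := by
      have := (Finset.mem_filter.mp hd).2
      exact this
    have hstripn : ¬ IsHStrip mu lam := by
      intro h
      rw [hstrip_iff_bad_empty hsub] at h
      exact h d hdNew hdBadl
    rw [if_neg (fun h => hstripn h.2), zero_add]
    by_cases hsing : Bad = {d}
    · -- exactly one bad box d; both sides equal content d
      have hBadIff : ∀ {c : ℕ × ℕ}, c ∈ New → (c.1 + 1, c.2) ∈ lam → c = d := by
        intro c hc hcl
        have : c ∈ Bad := Finset.mem_filter.mpr ⟨hc, hcl⟩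
        rw [hsing] at this
        exact Finset.mem_singleton.mp this
      have hddNew : (d.1 + 1, d.2) ∈ New := by
        refine hNewOfMem hdBadl (fun hm => ?_)
        exact (hmemNew hdNew).2 (mu.up_left_mem (Nat.le_succ _) le_rfl hm)
      have hddne : (d.1 + 1, d.2) ≠ d := by
        intro h
        have := (Prod.ext_iff.mp h).1
        omega
      -- LHS : single term at (d.1+1, d.2)
      have hLHS : ∑ b ∈ New, (if RemP lam b ∧ Hm mu lam b then (content b : ℚ) + 1 else 0)
          = (content d : ℚ) := by
        rw [Finset.sum_eq_single_of_mem (d.1 + 1, d.2) hddNew]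
        · rw [if_pos]
          · simp only [content]; push_cast; ring
          constructor
          · refine ⟨hdBadl, ?_, ?_⟩
            · intro hdd
              exact hddne (hBadIff hddNew hdd)
            · intro hrr
              have hrl : (d.1, d.2 + 1) ∈ lam :=
                lam.up_left_mem (Nat.le_succ _) le_rfl hrr
              have hrNew : (d.1, d.2 + 1) ∈ New := by
                refine hNewOfMem hrl (fun hm => ?_)
                exact (hmemNew hdNew).2 (mu.up_left_mem le_rfl (Nat.le_succ _) hm)
              have : (d.1, d.2 + 1) = d := hBadIff hrNew (by exact hrr)
              rw [Prod.ext_iff] at this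
              omega
          · intro c hc hcb
            by_cases hcl : (c.1 + 1, c.2) ∈ lam
            · right
              have : c = d := hBadIff hc hcl
              rw [this]
            · exact Or.inl hcl
        · intro b hb hbne
          rw [if_neg]
          rintro ⟨hR, hm⟩
          have hbd : b ≠ d := by
            rintro rfl
            exact hR.2.1 hdBadl
          rcases hm d hdNew (fun h => hbd h.symm) with h' | h'
          · exact h' hdBadl
          · exact hbne (h' ▸ rfl)
      have hRHS : ∑ b ∈ New, (if AddP mu b ∧ Hp mu lam b then (content b : ℚ) else 0)
          = (content d : ℚ) := by
        rw [Finset.sum_eq_single_of_mem d hdNew]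
        · rw [if_pos]
          constructor
          · refine ⟨(hmemNew hdNew).2, ?_, ?_⟩
            · rcases Nat.eq_zero_or_pos d.1 with h0 | h0
              · exact Or.inl h0
              · right
                have hup : (d.1 - 1, d.2) ∈ lam :=
                  lam.up_left_mem (Nat.sub_le _ _) le_rfl (hmemNew hdNew).1
                by_contra hupm
                have hupNew : (d.1 - 1, d.2) ∈ New := hNewOfMem hup hupm
                have hupl : (d.1 - 1 + 1, d.2) ∈ lam := by
                  have he : d.1 - 1 + 1 = d.1 := by omega
                  rw [he]; exact (hmemNew hdNew).1
                have : (d.1 - 1, d.2) = d := hBadIff hupNew hupl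
                rw [Prod.ext_iff] at this
                omega
            · rcases Nat.eq_zero_or_pos d.2 with h0 | h0
              · exact Or.inl h0
              · right
                have hlf : (d.1, d.2 - 1) ∈ lam :=
                  lam.up_left_mem le_rfl (Nat.sub_le _ _) (hmemNew hdNew).1
                by_contra hlm
                have hlfNew : (d.1, d.2 - 1) ∈ New := hNewOfMem hlf hlm
                have hlfl' : (d.1 + 1, d.2 - 1) ∈ lam :=
                  lam.up_left_mem le_rfl (Nat.sub_le _ _) hdBadl
                have : (d.1, d.2 - 1) = d := hBadIff hlfNew hlfl'
                rw [Prod.ext_iff] at this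
                omega
          · intro c hc hcd hcl
            exact hcd (hBadIff hc hcl)
        · intro b hb hbne
          rw [if_neg]
          rintro ⟨hA, hp⟩
          exact hp d hdNew (fun h => hbne h.symm) hdBadl
      rw [hLHS, hRHS]
    · -- at least two bad boxes; both sides vanish
      have h2 : ∃ e ∈ Bad, e ≠ d := by
        by_contra hno
        push_neg at hno
        apply hsing
        apply Finset.eq_singleton_iff_unique_mem.mpr ⟨hd, hno⟩
      obtain ⟨e, heBad, hed⟩ := h2
      have heNew : e ∈ New := (Finset.mem_filter.mp heBad).1
      have hel : (e.1 + 1, e.2) ∈ lam := (Finset.mem_filter.mp heBad).2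
      rw [Finset.sum_eq_zero, Finset.sum_eq_zero]
      · intro b hb
        rw [if_neg]
        rintro ⟨hA, hp⟩
        by_cases hbd : b = d
        · subst hbd
          exact hp e heNew hed hel
        · exact hp d hdNew (fun h => hbd h.symm) hdBadl
      · intro b hb
        rw [if_neg]
        rintro ⟨hR, hm⟩
        have hbd : b ≠ d ∧ b ≠ e := by
          constructor <;> rintro rfl
          · exact hR.2.1 hdBadl
          · exact hR.2.1 hel
        have h1 : (d.1 + 1, d.2) = b := by
          rcases hm d hdNew (fun h => hbd.1 h.symm) with h' | h'
          · exact absurd hdBadl h'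
          · exact h'
        have h2 : (e.1 + 1, e.2) = b := by
          rcases hm e heNew (fun h => hbd.2 h.symm) with h' | h'
          · exact absurd hel h'
          · exact h'
        apply hed
        have := h1.trans h2.symm
        rw [Prod.ext_iff] at this ⊢
        simp only at this
        omega

end Core


section Hooks

lemma hook_shaped {ν : YoungDiagram} (hne : (0, 0) ∈ ν)
    (hshape : ∀ c ∈ ν.cells, c.1 = 0 ∨ c.2 = 0) :
    ν = hookYD (ν.rowLen 0) (ν.colLen 0 - 1) := by
  have hy : 0 < ν.colLen 0 := YoungDiagram.mem_iff_lt_colLen.mp hne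
  apply YoungDiagram.ext
  ext c
  obtain ⟨i, j⟩ := c
  rw [YoungDiagram.mem_cells, YoungDiagram.mem_cells, mem_hookYD]
  constructor
  · intro h
    rcases hshape (i, j) ((YoungDiagram.mem_cells _).mpr h) with h0 | h0
    · simp only at h0
      subst h0
      exact Or.inl ⟨rfl, YoungDiagram.mem_iff_lt_rowLen.mp h⟩
    · simp only at h0
      subst h0
      refine Or.inr ⟨rfl, ?_⟩
      have := YoungDiagram.mem_iff_lt_colLen.mp h
      omega
  · rintro (⟨h0, hlt⟩ | ⟨h0, hlt⟩)
    · simp only at h0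
      subst h0
      exact YoungDiagram.mem_iff_lt_rowLen.mpr hlt
    · simp only at h0
      subst h0
      apply YoungDiagram.mem_iff_lt_colLen.mpr
      omega

lemma pieri_col_char {r a' : ℕ} (hr : 1 ≤ r) (ν : YoungDiagram) :
    (ν.cells.card = (hookYD 1 a').cells.card + r ∧ IsHStrip (hookYD 1 a') ν) ↔
      (ν = hookYD r (a' + 1) ∨ ν = hookYD (r + 1) a') := by
  constructor
  · rintro ⟨hcard, hsub, hstrip⟩
    rw [card_hookYD le_rfl] at hcard
    have hcpos : 0 < ν.cells.card := by omega
    obtain ⟨c0, hc0⟩ := Finset.card_pos.mp hcpos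
    have h00 : (0, 0) ∈ ν := ν.up_left_mem (Nat.zero_le _) (Nat.zero_le _)
      ((YoungDiagram.mem_cells _).mp hc0)
    have h11 : ((1 : ℕ), (1 : ℕ)) ∉ ν := by
      intro h11
      have h01 : ((0 : ℕ), (1 : ℕ)) ∈ ν := ν.up_left_mem (Nat.zero_le _) le_rfl h11
      have h01c : ((0 : ℕ), (1 : ℕ)) ∉ (hookYD 1 a').cells := by
        intro hmem
        have := mem_hookYD.mp ((YoungDiagram.mem_cells _).mp hmem)
        simp only at this
        omega
      exact hstrip (0, 1) ((YoungDiagram.mem_cells _).mpr h01) h01c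
        ((YoungDiagram.mem_cells _).mpr h11)
    have hshape : ∀ c ∈ ν.cells, c.1 = 0 ∨ c.2 = 0 := by
      rintro ⟨i, j⟩ hc
      by_contra hcon
      push_neg at hcon
      exact h11 (ν.up_left_mem (by omega) (by omega) ((YoungDiagram.mem_cells _).mp hc))
    have hform := hook_shaped h00 hshape
    set x := ν.rowLen 0 with hx
    set y := ν.colLen 0 with hy
    have hy1 : 0 < y := YoungDiagram.mem_iff_lt_colLen.mp h00
    have hx1 : 0 < x := YoungDiagram.mem_iff_lt_rowLen.mp h00
    have hcard2 : x + (y - 1) = 1 + a' + r := by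
      rw [hform, card_hookYD hx1] at hcard
      exact hcard
    have hcol : a' < y := by
      apply YoungDiagram.mem_iff_lt_colLen.mp
      apply (YoungDiagram.mem_cells _).mp
      apply hsub
      apply (YoungDiagram.mem_cells _).mpr
      exact mem_hookYD.mpr (Or.inr ⟨rfl, by omega⟩)
    have hylt : y < a' + 3 := by
      by_contra hcon
      push_neg at hcon
      have hm1 : (a' + 1, (0 : ℕ)) ∈ ν := YoungDiagram.mem_iff_lt_colLen.mpr (by omega)
      have hm2 : (a' + 2, (0 : ℕ)) ∈ ν := YoungDiagram.mem_iff_lt_colLen.mpr (by omega)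
      have hnotcol : ((a' + 1 : ℕ), (0 : ℕ)) ∉ (hookYD 1 a').cells := by
        intro hmem
        have := mem_hookYD.mp ((YoungDiagram.mem_cells _).mp hmem)
        simp only at this
        omega
      exact hstrip (a' + 1, 0) ((YoungDiagram.mem_cells _).mpr hm1) hnotcol
        ((YoungDiagram.mem_cells _).mpr hm2)
    rcases Nat.lt_or_ge y (a' + 2) with hcase | hcase
    · -- y = a' + 1, x = r + 1
      right
      have hyv : y = a' + 1 := by omega
      have hxv : x = r + 1 := by omega
      rw [hform, hyv, hxv]
      norm_num
    · -- y = a' + 2, x = r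
      left
      have hyv : y = a' + 2 := by omega
      have hxv : x = r := by omega
      rw [hform, hyv, hxv]
      norm_num
  · intro h
    have hmemcol : ∀ c ∈ (hookYD 1 a').cells, (c.1 = 0 ∧ c.2 = 0) ∨ (c.2 = 0 ∧ c.1 < a' + 1) := by
      intro c hc
      have := mem_hookYD.mp ((YoungDiagram.mem_cells _).mp hc)
      omega
    rcases h with rfl | rfl
    · refine ⟨?_, ?_, ?_⟩
      · rw [card_hookYD hr, card_hookYD le_rfl]
        omega
      · intro c hc
        rcases hmemcol c hc with ⟨h1, h2⟩ | ⟨h1, h2⟩ <;>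
        · apply (YoungDiagram.mem_cells _).mpr
          apply mem_hookYD.mpr
          omega
      · rintro ⟨i, j⟩ hc hnc hd
        have hm := mem_hookYD.mp ((YoungDiagram.mem_cells _).mp hc)
        have hd' := mem_hookYD.mp ((YoungDiagram.mem_cells _).mp hd)
        simp only at hm hd'
        have hnc' : ¬ ((i = 0 ∧ j < 1) ∨ (j = 0 ∧ i < a' + 1)) := by
          intro hx
          exact hnc ((YoungDiagram.mem_cells _).mpr (mem_hookYD.mpr (by omega)))
        omega
    · refine ⟨?_, ?_, ?_⟩
      · rw [card_hookYD (by omega), card_hookYD le_rfl]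
        omega
      · intro c hc
        rcases hmemcol c hc with ⟨h1, h2⟩ | ⟨h1, h2⟩ <;>
        · apply (YoungDiagram.mem_cells _).mpr
          apply mem_hookYD.mpr
          omega
      · rintro ⟨i, j⟩ hc hnc hd
        have hm := mem_hookYD.mp ((YoungDiagram.mem_cells _).mp hc)
        have hd' := mem_hookYD.mp ((YoungDiagram.mem_cells _).mp hd)
        simp only at hm hd'
        have hnc' : ¬ ((i = 0 ∧ j < 1) ∨ (j = 0 ∧ i < a' + 1)) := by
          intro hx
          exact hnc ((YoungDiagram.mem_cells _).mpr (mem_hookYD.mpr (by omega)))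
        omega

lemma covers_hook_row {r a : ℕ} (hr : 1 ≤ r) :
    Covers (hookYD r a) (hookYD (r + 1) a) ∧
      remContent (hookYD r a) (hookYD (r + 1) a) = (r : ℤ) := by
  have hdiff : (hookYD (r + 1) a).cells \ (hookYD r a).cells = {((0 : ℕ), r)} := by
    ext c
    obtain ⟨i, j⟩ := c
    simp only [Finset.mem_sdiff, Finset.mem_singleton, Prod.ext_iff]
    rw [show ((i,j) ∈ (hookYD (r+1) a).cells) ↔ _ from YoungDiagram.mem_cells _,
      show ((i,j) ∈ (hookYD r a).cells) ↔ _ from YoungDiagram.mem_cells _]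
    rw [mem_hookYD, mem_hookYD]
    simp only
    omega
  constructor
  · constructor
    · intro c hc
      have := mem_hookYD.mp ((YoungDiagram.mem_cells _).mp hc)
      exact (YoungDiagram.mem_cells _).mpr (mem_hookYD.mpr (by omega))
    · rw [card_hookYD (by omega), card_hookYD hr]
      omega
  · rw [remContent, hdiff, Finset.sum_singleton]
    simp

lemma covers_hook_col {r a : ℕ} (hr : 1 ≤ r) :
    Covers (hookYD r a) (hookYD r (a + 1)) ∧
      remContent (hookYD r a) (hookYD r (a + 1)) = -((a : ℤ) + 1) := by
  have hdiff : (hookYD r (a + 1)).cells \ (hookYD r a).cells = {((a + 1 : ℕ), (0 : ℕ))} := by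
    ext c
    obtain ⟨i, j⟩ := c
    simp only [Finset.mem_sdiff, Finset.mem_singleton, Prod.ext_iff]
    rw [show ((i,j) ∈ (hookYD r (a+1)).cells) ↔ _ from YoungDiagram.mem_cells _,
      show ((i,j) ∈ (hookYD r a).cells) ↔ _ from YoungDiagram.mem_cells _]
    rw [mem_hookYD, mem_hookYD]
    simp only
    omega
  constructor
  · constructor
    · intro c hc
      have := mem_hookYD.mp ((YoungDiagram.mem_cells _).mp hc)
      exact (YoungDiagram.mem_cells _).mpr (mem_hookYD.mpr (by omega))
    · rw [card_hookYD hr, card_hookYD hr]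
      omega
  · rw [remContent, hdiff, Finset.sum_singleton]
    push_cast
    ring

lemma covers_hook_cases {r a : ℕ} (hr : 1 ≤ r) {ν : YoungDiagram}
    (h : Covers (hookYD r a) ν) :
    ν = hookYD (r + 1) a ∨ ν = hookYD r (a + 1) ∨ remContent (hookYD r a) ν = 0 := by
  obtain ⟨b, hb⟩ := covers_sdiff h
  obtain ⟨hb1, hb2, hb3, hb4⟩ := covers_insert h hb
  have hbh : ((b.1 = 0 ∧ b.2 < r) ∨ (b.2 = 0 ∧ b.1 < a + 1)) → False := fun hx =>
    hb2 (mem_hookYD.mpr hx)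
  have hmem : ∀ d : ℕ × ℕ, d ∈ ν → d = b ∨ ((d.1 = 0 ∧ d.2 < r) ∨ (d.2 = 0 ∧ d.1 < a + 1)) := by
    intro d hd
    have : d ∈ ν.cells := (YoungDiagram.mem_cells _).mpr hd
    rw [hb3] at this
    rcases Finset.mem_insert.mp this with h' | h'
    · exact Or.inl h'
    · exact Or.inr (mem_hookYD.mp ((YoungDiagram.mem_cells _).mp h'))
  by_cases hb10 : b.1 = 0
  · -- b = (0, r)
    left
    have hb2r : b.2 = r := by
      by_contra hne
      have hgt : r < b.2 := by
        rcases Nat.lt_or_ge b.2 r with h' | h'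
        · exact absurd (Or.inl ⟨hb10, h'⟩) hbh
        · omega
      have hprev : (b.1, b.2 - 1) ∈ ν := ν.up_left_mem le_rfl (Nat.sub_le _ _) hb1
      rcases hmem _ hprev with h' | h'
      · rw [Prod.ext_iff] at h'
        simp only at h'
        omega
      · omega
    have hbv : b = ((0 : ℕ), r) := Prod.ext hb10 hb2r
    apply YoungDiagram.ext
    rw [hb3, hbv]
    ext c
    obtain ⟨i, j⟩ := c
    simp only [Finset.mem_insert, Prod.ext_iff]
    rw [show ((i,j) ∈ (hookYD r a).cells) ↔ _ from YoungDiagram.mem_cells _,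
      show ((i,j) ∈ (hookYD (r+1) a).cells) ↔ _ from YoungDiagram.mem_cells _,
      mem_hookYD, mem_hookYD]
    simp only
    omega
  · by_cases hb20 : b.2 = 0
    · -- b = (a+1, 0)
      right; left
      have hb1a : b.1 = a + 1 := by
        by_contra hne
        have hgt : a + 1 < b.1 := by
          rcases Nat.lt_or_ge b.1 (a + 1) with h' | h'
          · exact absurd (Or.inr ⟨hb20, h'⟩) hbh
          · omega
        have hprev : (b.1 - 1, b.2) ∈ ν := ν.up_left_mem (Nat.sub_le _ _) le_rfl hb1
        rcases hmem _ hprev with h' | h'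
        · rw [Prod.ext_iff] at h'
          simp only at h'
          omega
        · omega
      have hbv : b = ((a + 1 : ℕ), (0 : ℕ)) := Prod.ext hb1a hb20
      apply YoungDiagram.ext
      rw [hb3, hbv]
      ext c
      obtain ⟨i, j⟩ := c
      simp only [Finset.mem_insert, Prod.ext_iff]
      rw [show ((i,j) ∈ (hookYD r a).cells) ↔ _ from YoungDiagram.mem_cells _,
        show ((i,j) ∈ (hookYD r (a+1)).cells) ↔ _ from YoungDiagram.mem_cells _,
        mem_hookYD, mem_hookYD]
      simp only
      omega
    · -- b = (1,1), content 0
      right; right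
      have hl : (b.1, b.2 - 1) ∈ ν := ν.up_left_mem le_rfl (Nat.sub_le _ _) hb1
      have hu : (b.1 - 1, b.2) ∈ ν := ν.up_left_mem (Nat.sub_le _ _) le_rfl hb1
      have hb21 : b.2 = 1 := by
        rcases hmem _ hl with h' | h'
        · rw [Prod.ext_iff] at h'
          simp only at h'
          omega
        · simp only at h'
          omega
      have hb11 : b.1 = 1 := by
        rcases hmem _ hu with h' | h'
        · rw [Prod.ext_iff] at h'
          simp only at h'
          omega
        · simp only at h'
          omega
      rw [hb4, content, hb21, hb11]
      simp

end Hooks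


end XiAux


section Algebraic

open Finset

variable {L : Type*} [CommRing L] [Algebra ℚ L] (s : Module.Basis YoungDiagram ℚ L)

lemma repr_expand (x : L) (T : Finset YoungDiagram) (h : (s.repr x).support ⊆ T) :
    x = ∑ τ ∈ T, s.repr x τ • s τ := by
  conv_lhs => rw [← s.linearCombination_repr x]
  rw [Finsupp.linearCombination_apply, Finsupp.sum]
  exact Finset.sum_subset h (fun τ _ hτ => by
    rw [Finsupp.notMem_support_iff.mp hτ, zero_smul])

lemma support_subset_of_coeff (x : L) (T : Finset YoungDiagram)
    (h : ∀ μ, μ ∉ T → s.repr x μ = 0) : (s.repr x).support ⊆ T := by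
  intro μ hμ
  by_contra hn
  exact Finsupp.mem_support_iff.mp hμ (h μ hn)

lemma coeff_apply (A : Module.End ℚ L) (x : L) (T : Finset YoungDiagram)
    (hT : (s.repr x).support ⊆ T) (μ : YoungDiagram) :
    s.repr (A x) μ = ∑ τ ∈ T, s.repr x τ * s.repr (A (s τ)) μ := by
  conv_lhs => rw [repr_expand s x T hT]
  rw [map_sum, map_sum, Finsupp.finset_sum_apply]
  apply Finset.sum_congr rfl
  intro τ _
  rw [map_smul, map_smul, Finsupp.smul_apply, smul_eq_mul]

lemma coeff_mul (g x : L) (T : Finset YoungDiagram)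
    (hT : (s.repr x).support ⊆ T) (μ : YoungDiagram) :
    s.repr (g * x) μ = ∑ τ ∈ T, s.repr x τ * s.repr (g * s τ) μ := by
  conv_lhs => rw [repr_expand s x T hT]
  rw [Finset.mul_sum, map_sum, Finsupp.finset_sum_apply]
  apply Finset.sum_congr rfl
  intro τ _
  rw [mul_smul_comm, map_smul, Finsupp.smul_apply, smul_eq_mul]

lemma coeff_basis (κ μ : YoungDiagram) :
    s.repr (s κ) μ = if κ = μ then 1 else 0 := by
  rw [s.repr_self, Finsupp.single_apply]

/-- The content-weighted box-adding operator (the transpose of `nabla`). -/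
noncomputable def NOp : Module.End ℚ L :=
  Module.Basis.constr s ℚ (fun κ =>
    ∑ b ∈ ((Finset.range (κ.cells.card + 1)) ×ˢ (Finset.range (κ.cells.card + 1))).filter
      (XiAux.AddP κ), (XiAux.content b : ℚ) • s (XiAux.insertYD κ b))

lemma NOp_apply (κ : YoungDiagram) :
    NOp s (s κ) = ∑ b ∈ ((Finset.range (κ.cells.card + 1)) ×ˢ
        (Finset.range (κ.cells.card + 1))).filter (XiAux.AddP κ),
      (XiAux.content b : ℚ) • s (XiAux.insertYD κ b) :=
  Module.Basis.constr_basis s ℚ _ κ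

lemma coeff_NOp (κ μ : YoungDiagram) :
    s.repr (NOp s (s κ)) μ = if Covers κ μ then (remContent κ μ : ℚ) else 0 := by
  classical
  rw [NOp_apply, map_sum, Finsupp.finset_sum_apply]
  have hterm : ∀ b, (s.repr ((XiAux.content b : ℚ) • s (XiAux.insertYD κ b))) μ
      = if XiAux.insertYD κ b = μ then (XiAux.content b : ℚ) else 0 := by
    intro b
    rw [map_smul, Finsupp.smul_apply, coeff_basis, smul_eq_mul]
    by_cases h : XiAux.insertYD κ b = μ <;> simp [h]
  rw [Finset.sum_congr rfl (fun b _ => hterm b)]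
  by_cases hcov : Covers κ μ
  · rw [if_pos hcov]
    obtain ⟨b₀, hb1, hb2, hb3, hb4, hb5⟩ := XiAux.covers_exists_insert hcov
    have hb0grid : b₀ ∈ ((Finset.range (κ.cells.card + 1)) ×ˢ
        (Finset.range (κ.cells.card + 1))).filter (XiAux.AddP κ) := by
      rw [Finset.mem_filter, Finset.mem_product, Finset.mem_range, Finset.mem_range]
      have := XiAux.cell_lt_card ((YoungDiagram.mem_cells b₀).mpr hb1)
      rw [hcov.2] at this
      exact ⟨⟨by omega, by omega⟩, hb3⟩
    rw [Finset.sum_eq_single_of_mem b₀ hb0grid]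
    · rw [if_pos hb4.symm, hb5]
    · intro b hb hbne
      rw [if_neg]
      intro he
      exact hbne (XiAux.insertYD_box_unique ((Finset.mem_filter.mp hb).2) hb3 (he.trans hb4))
  · rw [if_neg hcov]
    apply Finset.sum_eq_zero
    intro b hb
    rw [if_neg]
    intro he
    exact hcov (he ▸ XiAux.covers_insertYD ((Finset.mem_filter.mp hb).2))

end Algebraic


section Algebraic2

open Finset XiAux

variable {L : Type*} [CommRing L] [Algebra ℚ L] (s : Module.Basis YoungDiagram ℚ L)

lemma stepA
    (hPieri : ∀ (k : ℕ) (lam mu : YoungDiagram),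
      s.repr (s (rowYD k) * s lam) mu =
        if mu.cells.card = lam.cells.card + k ∧ IsHStrip lam mu then 1 else 0)
    {r a' : ℕ} (hr : 1 ≤ r) :
    s (rowYD r) * s (hookYD 1 a') = s (hookYD r (a' + 1)) + s (hookYD (r + 1) a') := by
  apply s.repr.injective
  ext ν
  rw [hPieri, map_add, Finsupp.add_apply, coeff_basis, coeff_basis]
  have hchar := pieri_col_char hr (a' := a') ν
  have hne := hookYD_succ_ne (a := a') hr
  rw [if_congr hchar rfl rfl]
  by_cases h1 : ν = hookYD r (a' + 1)
  · have hBν : hookYD (r + 1) a' ≠ ν := fun h => hne (h.trans h1)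
    rw [if_pos (Or.inl h1), if_pos h1.symm, if_neg hBν]
    norm_num
  · by_cases h2 : ν = hookYD (r + 1) a'
    · have hAν : hookYD r (a' + 1) ≠ ν := fun h => h1 h.symm
      rw [if_pos (Or.inr h2), if_neg hAν, if_pos h2.symm]
      norm_num
    · rw [if_neg (by rintro (h | h); exacts [h1 h, h2 h]), if_neg (fun h => h1 h.symm),
        if_neg (fun h => h2 h.symm)]
      norm_num

lemma N_hook {r a : ℕ} (hr : 1 ≤ r) :
    NOp s (s (hookYD r a)) =
      ((r : ℚ)) • s (hookYD (r + 1) a) - ((a : ℚ) + 1) • s (hookYD r (a + 1)) := by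
  apply s.repr.injective
  ext ν
  rw [coeff_NOp, map_sub, map_smul, map_smul, Finsupp.sub_apply, Finsupp.smul_apply,
    Finsupp.smul_apply, coeff_basis, coeff_basis, smul_eq_mul, smul_eq_mul]
  have hne := hookYD_succ_ne (a := a) hr
  by_cases hc : Covers (hookYD r a) ν
  · rw [if_pos hc]
    rcases covers_hook_cases hr hc with rfl | rfl | h0
    · rw [if_pos rfl, if_neg (fun h : hookYD r (a + 1) = hookYD (r + 1) a => hne h.symm),
        (covers_hook_row hr).2]
      norm_num
    · rw [if_neg (fun h : hookYD (r + 1) a = hookYD r (a + 1) => hne h), if_pos rfl,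
        (covers_hook_col hr).2]
      push_cast
      ring
    · rw [h0]
      have hn1 : hookYD (r + 1) a ≠ ν := by
        rintro rfl
        rw [(covers_hook_row hr).2] at h0
        omega
      have hn2 : hookYD r (a + 1) ≠ ν := by
        rintro rfl
        rw [(covers_hook_col hr).2] at h0
        omega
      rw [if_neg hn1, if_neg hn2]
      norm_num
  · rw [if_neg hc]
    have hn1 : hookYD (r + 1) a ≠ ν := by
      rintro rfl
      exact hc (covers_hook_row hr).1
    have hn2 : hookYD r (a + 1) ≠ ν := by
      rintro rfl
      exact hc (covers_hook_col hr).1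
    rw [if_neg hn1, if_neg hn2]
    norm_num

lemma N_row
    (hPieri : ∀ (k : ℕ) (lam mu : YoungDiagram),
      s.repr (s (rowYD k) * s lam) mu =
        if mu.cells.card = lam.cells.card + k ∧ IsHStrip lam mu then 1 else 0)
    {r : ℕ} (hr : 1 ≤ r) :
    NOp s (s (rowYD r)) =
      ((r : ℚ) + 1) • s (rowYD (r + 1)) - s (rowYD 1) * s (rowYD r) := by
  have hA := stepA s hPieri (a' := 0) hr
  rw [hookYD_one_zero] at hA
  have h1 : NOp s (s (rowYD r)) =
      (r : ℚ) • s (hookYD (r + 1) 0) - ((0 : ℚ) + 1) • s (hookYD r 1) := by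
    rw [show s (rowYD r) = s (hookYD r 0) by rw [← rowYD_eq_hookYD hr]]
    exact N_hook s (a := 0) hr
  have h2 : s (hookYD r 1) = s (rowYD r) * s (rowYD 1) - s (rowYD (r + 1)) := by
    rw [show s (rowYD (r + 1)) = s (hookYD (r + 1) 0) by
      rw [← rowYD_eq_hookYD (by omega)], hA]
    ring
  rw [h1, h2, show s (hookYD (r + 1) 0) = s (rowYD (r + 1)) by
    rw [← rowYD_eq_hookYD (by omega)]]
  simp only [Algebra.smul_def, map_add, map_one, zero_add]
  ring

lemma N_pSym
    (hPieri : ∀ (k : ℕ) (lam mu : YoungDiagram),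
      s.repr (s (rowYD k) * s lam) mu =
        if mu.cells.card = lam.cells.card + k ∧ IsHStrip lam mu then 1 else 0)
    (k : ℕ) : NOp s (pSym s (k + 1)) = ((k : ℚ) + 1) • pSym s (k + 2) := by
  rw [pSym, map_sum]
  have h1 : ∀ a ∈ Finset.range (k + 1), NOp s (((-1 : ℚ) ^ a) • s (hookYD (k + 1 - a) a))
      = (((k + 1 - a : ℕ) : ℚ) * (-1 : ℚ) ^ a) • s (hookYD (k + 2 - a) a)
        + ((-1 : ℚ) ^ (a + 1) * ((a : ℚ) + 1)) • s (hookYD (k + 1 - a) (a + 1)) := by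
    intro a ha
    rw [Finset.mem_range] at ha
    rw [map_smul, N_hook s (r := k + 1 - a) (by omega)]
    have he : k + 1 - a + 1 = k + 2 - a := by omega
    rw [he]
    simp only [Algebra.smul_def, map_mul, map_pow, map_neg, map_one, map_add, map_natCast]
    ring
  rw [Finset.sum_congr rfl h1, Finset.sum_add_distrib]
  have h2 : (∑ a ∈ Finset.range (k + 1),
        ((-1 : ℚ) ^ (a + 1) * ((a : ℚ) + 1)) • s (hookYD (k + 1 - a) (a + 1)))
      = ∑ b ∈ Finset.range (k + 2), ((-1 : ℚ) ^ b * (b : ℚ)) • s (hookYD (k + 2 - b) b) := by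
    rw [Finset.sum_range_succ' (fun b => ((-1 : ℚ) ^ b * (b : ℚ)) • s (hookYD (k + 2 - b) b))
      (k + 1)]
    norm_num
    apply Finset.sum_congr rfl
    intro a ha
    have he : k + 2 - (a + 1) = k + 1 - a := by omega
    rw [he]
  rw [h2]
  have h3 : (∑ a ∈ Finset.range (k + 2),
        (((k + 1 - a : ℕ) : ℚ) * (-1 : ℚ) ^ a) • s (hookYD (k + 2 - a) a))
      = ∑ a ∈ Finset.range (k + 1),
        (((k + 1 - a : ℕ) : ℚ) * (-1 : ℚ) ^ a) • s (hookYD (k + 2 - a) a) := by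
    rw [Finset.sum_range_succ]
    norm_num
  rw [← h3, ← Finset.sum_add_distrib, pSym, Finset.smul_sum]
  apply Finset.sum_congr rfl
  intro a ha
  rw [Finset.mem_range] at ha
  rw [← add_smul, smul_smul]
  congr 1
  have hc : ((k + 1 - a : ℕ) : ℚ) = (k : ℚ) + 1 - (a : ℚ) := by
    rw [Nat.cast_sub (by omega)]
    push_cast
    ring
  rw [hc]
  ring

end Algebraic2


section Algebraic3

open Finset XiAux

variable {L : Type*} [CommRing L] [Algebra ℚ L] (s : Module.Basis YoungDiagram ℚ L)

lemma star
    (hPieri : ∀ (k : ℕ) (lam mu : YoungDiagram),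
      s.repr (s (rowYD k) * s lam) mu =
        if mu.cells.card = lam.cells.card + k ∧ IsHStrip lam mu then 1 else 0)
    {r : ℕ} (hr : 1 ≤ r) (mu : YoungDiagram) :
    NOp s (s (rowYD r) * s mu) + s (rowYD 1) * (s (rowYD r) * s mu)
      = ((r : ℚ) + 1) • (s (rowYD (r + 1)) * s mu) + s (rowYD r) * NOp s (s mu) := by
  classical
  apply s.repr.injective
  ext lam
  simp only [map_add, Finsupp.add_apply, map_smul, Finsupp.smul_apply, smul_eq_mul]
  set Tr := diagramsOfSize (mu.cells.card + r) with hTrdef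
  have hsupp : (s.repr (s (rowYD r) * s mu)).support ⊆ Tr := by
    apply support_subset_of_coeff
    intro ν hν
    rw [hPieri, if_neg]
    rintro ⟨h1, _⟩
    exact hν (mem_diagramsOfSize.mpr h1)
  have hL : s.repr (NOp s (s (rowYD r) * s mu)) lam
      + s.repr (s (rowYD 1) * (s (rowYD r) * s mu)) lam
      = ∑ b ∈ lam.cells \ mu.cells,
        if RemP lam b ∧ (eraseYD lam b).cells.card = mu.cells.card + r ∧
            IsHStrip mu (eraseYD lam b)
        then (content b : ℚ) + 1 else 0 := by
    rw [coeff_apply s (NOp s) _ Tr hsupp lam, coeff_mul s (s (rowYD 1)) _ Tr hsupp lam,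
      ← Finset.sum_add_distrib]
    have hterm : ∀ τ ∈ Tr,
        s.repr (s (rowYD r) * s mu) τ * s.repr (NOp s (s τ)) lam
          + s.repr (s (rowYD r) * s mu) τ * s.repr (s (rowYD 1) * s τ) lam
        = ∑ b ∈ lam.cells \ mu.cells,
            if RemP lam b ∧ τ = eraseYD lam b ∧
                (eraseYD lam b).cells.card = mu.cells.card + r ∧
                IsHStrip mu (eraseYD lam b)
            then (content b : ℚ) + 1 else 0 := by
      intro τ _
      rw [coeff_NOp, hPieri, hPieri]
      rw [show (if lam.cells.card = τ.cells.card + 1 ∧ IsHStrip τ lam then (1 : ℚ) else 0)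
          = (if Covers τ lam then (1 : ℚ) else 0) from by
        rw [if_congr covers_iff_hstrip.symm rfl rfl]]
      by_cases hC1 : τ.cells.card = mu.cells.card + r ∧ IsHStrip mu τ
      swap
      · rw [if_neg hC1, zero_mul, zero_mul, add_zero]
        symm
        apply Finset.sum_eq_zero
        intro b hb
        rw [if_neg]
        rintro ⟨h1, rfl, h3, h4⟩
        exact hC1 ⟨h3, h4⟩
      rw [if_pos hC1, one_mul, one_mul]
      by_cases hC2 : Covers τ lam
      swap
      · rw [if_neg hC2, if_neg hC2, add_zero]
        symm
        apply Finset.sum_eq_zero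
        intro b hb
        rw [if_neg]
        rintro ⟨h1, rfl, h3, h4⟩
        exact hC2 (covers_eraseYD h1)
      rw [if_pos hC2, if_pos hC2]
      obtain ⟨b₀, hb1, hb2, hb3, hb4, hb5⟩ := covers_exists_erase hC2
      have hb0mem : b₀ ∈ lam.cells \ mu.cells := Finset.mem_sdiff.mpr
        ⟨(YoungDiagram.mem_cells _).mpr hb1,
          fun hm => hb2 ((YoungDiagram.mem_cells _).mp (hC1.2.1 hm))⟩
      rw [Finset.sum_eq_single_of_mem b₀ hb0mem]
      · rw [if_pos ⟨hb3, hb4, by rw [← hb4]; exact hC1.1, by rw [← hb4]; exact hC1.2⟩, hb5]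
      · intro b hb hbne
        rw [if_neg]
        rintro ⟨h1, h2, _⟩
        exact hbne (eraseYD_box_unique h1 hb3 (h2.symm.trans hb4))
    rw [Finset.sum_congr rfl hterm, Finset.sum_comm]
    apply Finset.sum_congr rfl
    intro b _
    by_cases hc : RemP lam b ∧ (eraseYD lam b).cells.card = mu.cells.card + r ∧
        IsHStrip mu (eraseYD lam b)
    · rw [if_pos hc]
      rw [Finset.sum_eq_single_of_mem (eraseYD lam b) (mem_diagramsOfSize.mpr hc.2.1)]
      · rw [if_pos ⟨hc.1, rfl, hc.2⟩]
      · intro τ hτ hne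
        rw [if_neg]
        rintro ⟨_, rfl, _⟩
        exact hne rfl
    · rw [if_neg hc]
      apply Finset.sum_eq_zero
      intro τ _
      rw [if_neg]
      rintro ⟨h1, rfl, h3, h4⟩
      exact hc ⟨h1, h3, h4⟩
  have hT4 : s.repr (s (rowYD r) * NOp s (s mu)) lam
      = ∑ b ∈ lam.cells \ mu.cells,
        if AddP mu b ∧ lam.cells.card = (insertYD mu b).cells.card + r ∧
            IsHStrip (insertYD mu b) lam
        then (content b : ℚ) else 0 := by
    rw [NOp_apply, Finset.mul_sum, map_sum, Finsupp.finset_sum_apply]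
    set G := ((Finset.range (mu.cells.card + 1)) ×ˢ (Finset.range (mu.cells.card + 1))).filter
      (AddP mu) with hGdef
    have hpb : ∀ b ∈ G, s.repr (s (rowYD r) * ((content b : ℚ) • s (insertYD mu b))) lam
        = if AddP mu b ∧ lam.cells.card = (insertYD mu b).cells.card + r ∧
              IsHStrip (insertYD mu b) lam
          then (content b : ℚ) else 0 := by
      intro b hb
      rw [mul_smul_comm, map_smul, Finsupp.smul_apply, smul_eq_mul, hPieri]
      have hA := (Finset.mem_filter.mp hb).2
      by_cases hcond : lam.cells.card = (insertYD mu b).cells.card + r ∧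
          IsHStrip (insertYD mu b) lam
      · rw [if_pos hcond, if_pos ⟨hA, hcond⟩, mul_one]
      · rw [if_neg hcond, if_neg (fun h => hcond h.2), mul_zero]
    rw [Finset.sum_congr rfl hpb]
    have hnz : ∀ b : ℕ × ℕ,
        (if AddP mu b ∧ lam.cells.card = (insertYD mu b).cells.card + r ∧
            IsHStrip (insertYD mu b) lam then (content b : ℚ) else 0) ≠ 0 →
        b ∈ G ∧ b ∈ lam.cells \ mu.cells := by
      intro b hb
      by_cases hcond : AddP mu b ∧ lam.cells.card = (insertYD mu b).cells.card + r ∧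
          IsHStrip (insertYD mu b) lam
      swap
      · rw [if_neg hcond] at hb
        exact absurd rfl hb
      obtain ⟨hA, hcard, hHS⟩ := hcond
      have hbin : b ∈ (insertYD mu b).cells := by
        rw [cells_insertYD hA]
        exact Finset.mem_insert_self _ _
      have hblam : b ∈ lam.cells := hHS.1 hbin
      have hbmu : b ∉ mu.cells := fun hm => hA.1 ((YoungDiagram.mem_cells _).mp hm)
      constructor
      · rw [hGdef, Finset.mem_filter, Finset.mem_product, Finset.mem_range, Finset.mem_range]
        have := cell_lt_card ((YoungDiagram.mem_cells _).mp hbin)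
        rw [card_insertYD hA] at this
        exact ⟨⟨by omega, by omega⟩, hA⟩
      · exact Finset.mem_sdiff.mpr ⟨hblam, hbmu⟩
    rw [show (∑ b ∈ G,
        if AddP mu b ∧ lam.cells.card = (insertYD mu b).cells.card + r ∧
            IsHStrip (insertYD mu b) lam then (content b : ℚ) else 0)
        = ∑ b ∈ G ∩ (lam.cells \ mu.cells),
          if AddP mu b ∧ lam.cells.card = (insertYD mu b).cells.card + r ∧
              IsHStrip (insertYD mu b) lam then (content b : ℚ) else 0 from
      (Finset.sum_subset (Finset.inter_subset_left) (fun x hx hx2 => by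
        by_contra hne
        exact hx2 (Finset.mem_inter.mpr ⟨hx, (hnz x hne).2⟩))).symm]
    apply Finset.sum_subset (Finset.inter_subset_right)
    intro x hx hx2
    by_contra hne
    exact hx2 (Finset.mem_inter.mpr ⟨(hnz x hne).1, hx⟩)
  rw [hL, hT4, hPieri, core_identity mu lam r, mul_ite, mul_one, mul_zero]

end Algebraic3


section Algebraic4

open Finset XiAux

variable {L : Type*} [CommRing L] [Algebra ℚ L] (s : Module.Basis YoungDiagram ℚ L)

/-- Leibniz property of an operator with respect to an element. -/
def Qpred (N : Module.End ℚ L) (f : L) : Prop :=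
  ∀ g : L, N (f * g) = N f * g + f * N g

lemma Q_mul {N : Module.End ℚ L} {f g : L} (hf : Qpred N f) (hg : Qpred N g) :
    Qpred N (f * g) := by
  intro h
  rw [mul_assoc, hf (g * h), hg h, hf g]
  ring

lemma Q_smul {N : Module.End ℚ L} {f : L} (c : ℚ) (hf : Qpred N f) : Qpred N (c • f) := by
  intro g
  rw [smul_mul_assoc, map_smul, hf g, map_smul, smul_mul_assoc, smul_mul_assoc, smul_add]

lemma Q_sub {N : Module.End ℚ L} {f g : L} (hf : Qpred N f) (hg : Qpred N g) :
    Qpred N (f - g) := by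
  intro h
  rw [sub_mul, map_sub, hf h, hg h, map_sub, sub_mul, sub_mul]
  ring

lemma Q_sum {N : Module.End ℚ L} {ι : Type*} (t : Finset ι) (f : ι → L)
    (h : ∀ i ∈ t, Qpred N (f i)) : Qpred N (∑ i ∈ t, f i) := by
  intro g
  rw [Finset.sum_mul, map_sum, map_sum, Finset.sum_mul, Finset.sum_mul,
    ← Finset.sum_add_distrib]
  exact Finset.sum_congr rfl (fun i hi => h i hi g)

lemma Q_row
    (hPieri : ∀ (k : ℕ) (lam mu : YoungDiagram),
      s.repr (s (rowYD k) * s lam) mu =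
        if mu.cells.card = lam.cells.card + k ∧ IsHStrip lam mu then 1 else 0)
    {r : ℕ} (hr : 1 ≤ r) : Qpred (NOp s) (s (rowYD r)) := by
  have hmaps : (NOp s) ∘ₗ (LinearMap.mulLeft ℚ (s (rowYD r)))
      = LinearMap.mulLeft ℚ (NOp s (s (rowYD r)))
        + (LinearMap.mulLeft ℚ (s (rowYD r))) ∘ₗ (NOp s) := by
    apply s.ext
    intro mu
    simp only [LinearMap.comp_apply, LinearMap.add_apply, LinearMap.mulLeft_apply]
    have hstar := star s hPieri hr mu
    rw [eq_sub_of_add_eq hstar, N_row s hPieri hr]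
    simp only [Algebra.smul_def]
    ring
  intro g
  have := LinearMap.congr_fun hmaps g
  simpa only [LinearMap.comp_apply, LinearMap.add_apply, LinearMap.mulLeft_apply] using this

lemma Q_hook
    (hPieri : ∀ (k : ℕ) (lam mu : YoungDiagram),
      s.repr (s (rowYD k) * s lam) mu =
        if mu.cells.card = lam.cells.card + k ∧ IsHStrip lam mu then 1 else 0) :
    ∀ (a : ℕ) {r : ℕ}, 1 ≤ r → Qpred (NOp s) (s (hookYD r a)) := by
  intro a
  induction a with
  | zero =>
    intro r hr
    rw [← rowYD_eq_hookYD hr]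
    exact Q_row s hPieri hr
  | succ a ih =>
    intro r hr
    have hA := stepA s hPieri (a' := a) hr
    have he : s (hookYD r (a + 1)) = s (rowYD r) * s (hookYD 1 a) - s (hookYD (r + 1) a) := by
      rw [hA]; ring
    rw [he]
    exact Q_sub (Q_mul (Q_row s hPieri hr) (ih le_rfl)) (ih (by omega))

lemma Q_p
    (hPieri : ∀ (k : ℕ) (lam mu : YoungDiagram),
      s.repr (s (rowYD k) * s lam) mu =
        if mu.cells.card = lam.cells.card + k ∧ IsHStrip lam mu then 1 else 0)
    (k : ℕ) : Qpred (NOp s) (pSym s (k + 1)) := by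
  rw [pSym]
  apply Q_sum
  intro a ha
  rw [Finset.mem_range] at ha
  exact Q_smul _ (Q_hook s hPieri a (r := k + 1 - a) (by omega))

end Algebraic4


section Algebraic5

open Finset XiAux

variable {L : Type*} [CommRing L] [Algebra ℚ L] (s : Module.Basis YoungDiagram ℚ L)

/-- `A` is adjoint (in the basis `s`) to multiplication by `f`. -/
def AdjM (A : Module.End ℚ L) (f : L) : Prop :=
  ∀ lam mu : YoungDiagram, s.repr (A (s lam)) mu = s.repr (f * s mu) lam

lemma support_mul_swap (F G : YoungDiagram →₀ ℚ) :
    ∑ τ ∈ F.support, F τ * G τ = ∑ τ ∈ G.support, G τ * F τ := by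
  rw [show (∑ τ ∈ F.support, F τ * G τ) = ∑ τ ∈ F.support ∪ G.support, F τ * G τ from
    Finset.sum_subset Finset.subset_union_left (fun x _ hx => by
      rw [Finsupp.notMem_support_iff.mp hx, zero_mul]),
    show (∑ τ ∈ G.support, G τ * F τ) = ∑ τ ∈ F.support ∪ G.support, G τ * F τ from
    Finset.sum_subset Finset.subset_union_right (fun x _ hx => by
      rw [Finsupp.notMem_support_iff.mp hx, zero_mul])]
  exact Finset.sum_congr rfl (fun τ _ => mul_comm _ _)

lemma AdjM_one (hone : s (⊥ : YoungDiagram) = 1) : AdjM s 1 1 := by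
  intro lam mu
  rw [Module.End.one_apply, one_mul, coeff_basis, coeff_basis]
  by_cases h : lam = mu
  · rw [if_pos h, if_pos h.symm]
  · rw [if_neg h, if_neg (fun hh => h hh.symm)]

lemma AdjM_mul {A A' : Module.End ℚ L} {f f' : L} (h : AdjM s A f) (h' : AdjM s A' f') :
    AdjM s (A * A') (f * f') := by
  intro lam mu
  rw [Module.End.mul_apply]
  set T := (s.repr (A' (s lam))).support ∪ (s.repr (f * s mu)).support with hT
  rw [coeff_apply s A (A' (s lam)) T Finset.subset_union_left mu,
    show f * f' * s mu = f' * (f * s mu) from by ring,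
    coeff_mul s f' (f * s mu) T Finset.subset_union_right lam]
  apply Finset.sum_congr rfl
  intro τ _
  rw [h τ mu, h' lam τ]
  ring

lemma AdjM_smul (c : ℚ) {A : Module.End ℚ L} {f : L} (h : AdjM s A f) :
    AdjM s (c • A) (c • f) := by
  intro lam mu
  rw [LinearMap.smul_apply, map_smul, Finsupp.smul_apply, h lam mu, smul_mul_assoc,
    map_smul, Finsupp.smul_apply]

lemma AdjM_sum {ι : Type*} (t : Finset ι) (A : ι → Module.End ℚ L) (f : ι → L)
    (h : ∀ i ∈ t, AdjM s (A i) (f i)) : AdjM s (∑ i ∈ t, A i) (∑ i ∈ t, f i) := by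
  intro lam mu
  rw [LinearMap.sum_apply, map_sum, Finsupp.finset_sum_apply, Finset.sum_mul, map_sum,
    Finsupp.finset_sum_apply]
  exact Finset.sum_congr rfl (fun i hi => h i hi lam mu)

lemma AdjM_pow (hone : s (⊥ : YoungDiagram) = 1) {A : Module.End ℚ L} {f : L}
    (h : AdjM s A f) (n : ℕ) : AdjM s (A ^ n) (f ^ n) := by
  induction n with
  | zero =>
    rw [pow_zero, pow_zero]
    exact AdjM_one s hone
  | succ n ih =>
    rw [pow_succ, pow_succ]
    exact AdjM_mul s ih h

lemma AdjM_listprod (hone : s (⊥ : YoungDiagram) = 1) (A : ℕ → Module.End ℚ L) (f : ℕ → L)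
    (h : ∀ n, AdjM s (A n) (f n)) (l : List ℕ) :
    AdjM s ((l.map A).prod) ((l.map f).prod) := by
  induction l with
  | nil =>
    simp only [List.map_nil, List.prod_nil]
    exact AdjM_one s hone
  | cons a l ih =>
    simp only [List.map_cons, List.prod_cons]
    exact AdjM_mul s (h a) ih

lemma crux
    (hone : s (⊥ : YoungDiagram) = 1)
    (hPieri : ∀ (k : ℕ) (lam mu : YoungDiagram),
      s.repr (s (rowYD k) * s lam) mu =
        if mu.cells.card = lam.cells.card + k ∧ IsHStrip lam mu then 1 else 0)
    (xi nabla : Module.End ℚ L)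
    (hxi : ∀ lam mu : YoungDiagram,
      s.repr (xi (s lam)) mu = if Covers mu lam then 1 else 0)
    (hnabla : ∀ lam mu : YoungDiagram,
      s.repr (nabla (s lam)) mu = if Covers mu lam then (remContent mu lam : ℚ) else 0) :
    ∀ n : ℕ, AdjM s (rhoOp xi nabla n) (pSym s (n + 1)) := by
  intro n
  induction n with
  | zero =>
    intro lam mu
    show s.repr (xi (s lam)) mu = _
    have hp1 : pSym s 1 = s (rowYD 1) := by
      rw [pSym, Finset.sum_range_one, pow_zero, one_smul, hookYD_one_zero]
    rw [hxi, hp1, hPieri, if_congr covers_iff_hstrip.symm rfl rfl]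
  | succ n ih =>
    have e1 : ∀ lam mu : YoungDiagram,
        s.repr ((rhoOp xi nabla n) (nabla (s lam))) mu
        = s.repr (NOp s (pSym s (n + 1) * s mu)) lam := by
      intro lam mu
      rw [coeff_apply s (rhoOp xi nabla n) (nabla (s lam)) _ (subset_refl _) mu,
        coeff_apply s (NOp s) (pSym s (n + 1) * s mu) _ (subset_refl _) lam]
      rw [Finset.sum_congr rfl (fun τ _ => by rw [ih τ mu] :
        ∀ τ ∈ (s.repr (nabla (s lam))).support,
          s.repr (nabla (s lam)) τ * s.repr ((rhoOp xi nabla n) (s τ)) mu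
          = s.repr (nabla (s lam)) τ * s.repr (pSym s (n + 1) * s mu) τ)]
      rw [Finset.sum_congr rfl (fun τ _ => by rw [coeff_NOp, hnabla] :
        ∀ τ ∈ (s.repr (pSym s (n + 1) * s mu)).support,
          s.repr (pSym s (n + 1) * s mu) τ * s.repr (NOp s (s τ)) lam
          = s.repr (pSym s (n + 1) * s mu) τ * s.repr (nabla (s lam)) τ)]
      exact support_mul_swap _ _
    have e2 : ∀ lam mu : YoungDiagram,
        s.repr (nabla ((rhoOp xi nabla n) (s lam))) mu
        = s.repr (pSym s (n + 1) * NOp s (s mu)) lam := by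
      intro lam mu
      rw [coeff_apply s nabla ((rhoOp xi nabla n) (s lam)) _ (subset_refl _) mu,
        coeff_mul s (pSym s (n + 1)) (NOp s (s mu)) _ (subset_refl _) lam]
      rw [Finset.sum_congr rfl (fun τ _ => by rw [hnabla, ← coeff_NOp s mu τ] :
        ∀ τ ∈ (s.repr ((rhoOp xi nabla n) (s lam))).support,
          s.repr ((rhoOp xi nabla n) (s lam)) τ * s.repr (nabla (s τ)) mu
          = s.repr ((rhoOp xi nabla n) (s lam)) τ * s.repr (NOp s (s mu)) τ)]
      rw [support_mul_swap (s.repr ((rhoOp xi nabla n) (s lam))) (s.repr (NOp s (s mu)))]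
      exact Finset.sum_congr rfl (fun τ _ => by rw [ih lam τ])
    intro lam mu
    show s.repr ((((n : ℚ) + 1)⁻¹ •
        (rhoOp xi nabla n * nabla - nabla * rhoOp xi nabla n)) (s lam)) mu = _
    rw [LinearMap.smul_apply, LinearMap.sub_apply, Module.End.mul_apply, Module.End.mul_apply,
      map_smul, Finsupp.smul_apply, map_sub, Finsupp.sub_apply, e1 lam mu, e2 lam mu]
    have hQ := (Q_p s hPieri n) (s mu)
    rw [N_pSym s hPieri n, smul_mul_assoc] at hQ
    have hsub : NOp s (pSym s (n + 1) * s mu) - pSym s (n + 1) * NOp s (s mu)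
        = ((n : ℚ) + 1) • (pSym s (n + 2) * s mu) := by
      rw [hQ]
      exact add_sub_cancel_right _ _
    rw [show s.repr (NOp s (pSym s (n + 1) * s mu)) lam
        - s.repr (pSym s (n + 1) * NOp s (s mu)) lam
        = s.repr (NOp s (pSym s (n + 1) * s mu) - pSym s (n + 1) * NOp s (s mu)) lam from by
      rw [map_sub, Finsupp.sub_apply]]
    rw [hsub, map_smul, Finsupp.smul_apply, smul_eq_mul, smul_eq_mul, ← mul_assoc,
      inv_mul_cancel₀ (by positivity : ((n : ℚ) + 1) ≠ 0), one_mul]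

end Algebraic5


section Algebraic6

open Finset XiAux

variable {L : Type*} [CommRing L] [Algebra ℚ L] (s : Module.Basis YoungDiagram ℚ L)

/-- `f` is homogeneous of degree `d` for the multiplication action on the basis. -/
def Gr (d : ℕ) (f : L) : Prop :=
  ∀ κ τ : YoungDiagram, s.repr (f * s κ) τ ≠ 0 → τ.cells.card = κ.cells.card + d

lemma Gr_one : Gr s 0 1 := by
  intro κ τ h
  rw [one_mul, coeff_basis] at h
  by_cases he : κ = τ
  · rw [he]; omega
  · rw [if_neg he] at h; exact absurd rfl h

lemma Gr_row
    (hPieri : ∀ (k : ℕ) (lam mu : YoungDiagram),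
      s.repr (s (rowYD k) * s lam) mu =
        if mu.cells.card = lam.cells.card + k ∧ IsHStrip lam mu then 1 else 0)
    (k : ℕ) : Gr s k (s (rowYD k)) := by
  intro κ τ h
  rw [hPieri] at h
  by_cases hc : τ.cells.card = κ.cells.card + k ∧ IsHStrip κ τ
  · exact hc.1
  · rw [if_neg hc] at h; exact absurd rfl h

lemma Gr_mul {d e : ℕ} {f g : L} (hf : Gr s d f) (hg : Gr s e g) : Gr s (d + e) (f * g) := by
  intro κ τ h
  rw [mul_assoc, coeff_mul s f (g * s κ) _ (subset_refl _) τ] at h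
  obtain ⟨σ, hσ, hne⟩ := Finset.exists_ne_zero_of_sum_ne_zero h
  have h1 : s.repr (g * s κ) σ ≠ 0 := fun hz => hne (by rw [hz, zero_mul])
  have h2 : s.repr (f * s σ) τ ≠ 0 := fun hz => hne (by rw [hz, mul_zero])
  have := hg κ σ h1
  have := hf σ τ h2
  omega

lemma Gr_smul {d : ℕ} {f : L} (c : ℚ) (hf : Gr s d f) : Gr s d (c • f) := by
  intro κ τ h
  apply hf κ τ
  intro hz
  rw [smul_mul_assoc, map_smul, Finsupp.smul_apply, hz, smul_zero] at h
  exact h rfl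

lemma Gr_sub {d : ℕ} {f g : L} (hf : Gr s d f) (hg : Gr s d g) : Gr s d (f - g) := by
  intro κ τ h
  rw [sub_mul, map_sub, Finsupp.sub_apply] at h
  by_cases h1 : s.repr (f * s κ) τ ≠ 0
  · exact hf κ τ h1
  · push_neg at h1
    apply hg κ τ
    intro hz
    rw [h1, hz, sub_zero] at h
    exact h rfl

lemma Gr_sum {d : ℕ} {ι : Type*} (t : Finset ι) (f : ι → L)
    (h : ∀ i ∈ t, Gr s d (f i)) : Gr s d (∑ i ∈ t, f i) := by
  intro κ τ hs
  rw [Finset.sum_mul, map_sum, Finsupp.finset_sum_apply] at hs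
  obtain ⟨i, hi, hne⟩ := Finset.exists_ne_zero_of_sum_ne_zero hs
  exact h i hi κ τ hne

lemma Gr_pow {d : ℕ} {f : L} (hf : Gr s d f) : ∀ j : ℕ, Gr s (d * j) (f ^ j) := by
  intro j
  induction j with
  | zero => simpa using Gr_one s
  | succ j ih =>
    rw [pow_succ]
    exact Gr_mul s ih hf

lemma Gr_hook
    (hPieri : ∀ (k : ℕ) (lam mu : YoungDiagram),
      s.repr (s (rowYD k) * s lam) mu =
        if mu.cells.card = lam.cells.card + k ∧ IsHStrip lam mu then 1 else 0) :
    ∀ (a : ℕ) {r : ℕ}, 1 ≤ r → Gr s (r + a) (s (hookYD r a)) := by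
  intro a
  induction a with
  | zero =>
    intro r hr
    rw [← rowYD_eq_hookYD hr]
    simpa using Gr_row s hPieri r
  | succ a ih =>
    intro r hr
    have hA := stepA s hPieri (a' := a) hr
    have he : s (hookYD r (a + 1)) = s (rowYD r) * s (hookYD 1 a) - s (hookYD (r + 1) a) := by
      rw [hA]; ring
    rw [he]
    apply Gr_sub
    · have := Gr_mul s (Gr_row s hPieri r) (ih (r := 1) le_rfl)
      rwa [show r + (1 + a) = r + (a + 1) from by omega] at this
    · have := ih (r := r + 1) (by omega)
      rwa [show r + 1 + a = r + (a + 1) from by omega] at this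

lemma Gr_p
    (hPieri : ∀ (k : ℕ) (lam mu : YoungDiagram),
      s.repr (s (rowYD k) * s lam) mu =
        if mu.cells.card = lam.cells.card + k ∧ IsHStrip lam mu then 1 else 0)
    (k : ℕ) : Gr s (k + 1) (pSym s (k + 1)) := by
  rw [pSym]
  apply Gr_sum
  intro a ha
  rw [Finset.mem_range] at ha
  apply Gr_smul
  have := Gr_hook s hPieri a (r := k + 1 - a) (by omega)
  rwa [show k + 1 - a + a = k + 1 from by omega] at this

lemma Gr_prodpow
    (hPieri : ∀ (k : ℕ) (lam mu : YoungDiagram),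
      s.repr (s (rowYD k) * s lam) mu =
        if mu.cells.card = lam.cells.card + k ∧ IsHStrip lam mu then 1 else 0)
    (m : ℕ →₀ ℕ) (t : Finset ℕ) :
    Gr s (∑ n ∈ t, (n + 1) * m n) (∏ n ∈ t, pSym s (n + 1) ^ m n) := by
  induction t using Finset.cons_induction with
  | empty => simpa using Gr_one s
  | cons a t ha ih =>
    rw [Finset.sum_cons, Finset.prod_cons]
    exact Gr_mul s (Gr_pow s (Gr_p s hPieri a) (m a)) ih

lemma prod_sort_eq (t : Finset ℕ) (g : ℕ → L) :
    ((t.sort (· ≤ ·)).map g).prod = ∏ n ∈ t, g n := by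
  have h1 : ((t.sort (· ≤ ·)).map g : Multiset L).prod = ((t.sort (· ≤ ·)).map g).prod :=
    Multiset.prod_coe _
  rw [← h1]
  have h2 : ((t.sort (· ≤ ·)).map g : Multiset L) = Multiset.map g t.val := by
    rw [← Finset.sort_eq (s := t) (r := (· ≤ ·)), Multiset.map_coe]
  rw [h2]
  rfl

lemma aeval_expand (f : ℕ → L) (Q : MvPolynomial ℕ ℚ) :
    MvPolynomial.aeval f Q = ∑ m ∈ Q.support, MvPolynomial.coeff m Q •
      ((m.support.sort (· ≤ ·)).map fun n => f n ^ m n).prod := by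
  rw [MvPolynomial.aeval_def, MvPolynomial.eval₂_eq]
  apply Finset.sum_congr rfl
  intro m _
  rw [prod_sort_eq, Algebra.smul_def]

lemma Gr_basis
    (hone : s (⊥ : YoungDiagram) = 1)
    (hPieri : ∀ (k : ℕ) (lam mu : YoungDiagram),
      s.repr (s (rowYD k) * s lam) mu =
        if mu.cells.card = lam.cells.card + k ∧ IsHStrip lam mu then 1 else 0)
    (P : YoungDiagram → MvPolynomial ℕ ℚ)
    (hP : ∀ lam : YoungDiagram,
      MvPolynomial.aeval (fun n => pSym s (n + 1)) (P lam) = s lam)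
    (ν : YoungDiagram) : Gr s ν.cells.card (s ν) := by
  classical
  set w : (ℕ →₀ ℕ) → ℕ := fun m => ∑ n ∈ m.support, (n + 1) * m n with hw
  set y : ℕ → L := fun d => ∑ m ∈ (P ν).support.filter (fun m => w m = d),
    MvPolynomial.coeff m (P ν) • ∏ n ∈ m.support, pSym s (n + 1) ^ m n with hy
  have hGry : ∀ d, Gr s d (y d) := by
    intro d
    apply Gr_sum
    intro m hm
    rw [Finset.mem_filter] at hm
    apply Gr_smul
    have := Gr_prodpow s hPieri m m.support
    rwa [show (∑ n ∈ m.support, (n + 1) * m n) = d from hm.2] at this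
  set W : Finset ℕ := (P ν).support.image w with hW
  have hsum : ∑ d ∈ W, y d = s ν := by
    rw [hy]
    rw [Finset.sum_fiberwise_of_maps_to (fun m hm => Finset.mem_image_of_mem w hm)]
    rw [← hP ν, aeval_expand]
    apply Finset.sum_congr rfl
    intro m _
    rw [prod_sort_eq]
  have hcoeffy : ∀ d κ, κ.cells.card ≠ d → s.repr (y d) κ = 0 := by
    intro d κ hκ
    by_contra hne
    have : s.repr (y d * s ⊥) κ ≠ 0 := by
      rw [hone, mul_one]
      exact hne
    have := hGry d ⊥ κ this
    rw [YoungDiagram.cells_bot, Finset.card_empty] at this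
    omega
  have hvanish : ∀ d ∈ W, d ≠ ν.cells.card → y d = 0 := by
    intro d hdW hd
    have hcoeff : ∀ κ, s.repr (y d) κ = 0 := by
      intro κ
      by_cases hκ : κ.cells.card = d
      swap
      · exact hcoeffy d κ hκ
      · have h1 : s.repr (s ν) κ = ∑ d' ∈ W, s.repr (y d') κ := by
          rw [← hsum, map_sum, Finsupp.finset_sum_apply]
        have h2 : ∀ d' ∈ W, d' ≠ d → s.repr (y d') κ = 0 := by
          intro d' _ hd'
          exact hcoeffy d' κ (by omega)
        have h3 : s.repr (s ν) κ = 0 := by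
          rw [coeff_basis, if_neg]
          intro he
          rw [← he] at hκ
          omega
        rw [Finset.sum_eq_single_of_mem d hdW (fun d' h' hne => h2 d' h' hne)] at h1
        rw [← h1, h3]
    apply s.repr.injective
    ext κ
    simp [hcoeff κ]
  have hfin : s ν = ∑ d ∈ W.filter (fun d => d = ν.cells.card), y d := by
    rw [← hsum, ← Finset.sum_filter_add_sum_filter_not W (fun d => d = ν.cells.card) y]
    have hz : ∑ d ∈ W.filter (fun d => ¬ d = ν.cells.card), y d = 0 :=
      Finset.sum_eq_zero (fun d hd => by
        rw [Finset.mem_filter] at hd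
        exact hvanish d hd.1 hd.2)
    rw [hz, add_zero]
  rw [hfin]
  apply Gr_sum
  intro d hd
  rw [Finset.mem_filter] at hd
  rw [← hd.2]
  exact hGry d

lemma graded_support
    (hone : s (⊥ : YoungDiagram) = 1)
    (hPieri : ∀ (k : ℕ) (lam mu : YoungDiagram),
      s.repr (s (rowYD k) * s lam) mu =
        if mu.cells.card = lam.cells.card + k ∧ IsHStrip lam mu then 1 else 0)
    (P : YoungDiagram → MvPolynomial ℕ ℚ)
    (hP : ∀ lam : YoungDiagram,
      MvPolynomial.aeval (fun n => pSym s (n + 1)) (P lam) = s lam)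
    (mu nu : YoungDiagram) :
    (s.repr (s mu * s nu)).support ⊆ diagramsOfSize (mu.cells.card + nu.cells.card) := by
  apply support_subset_of_coeff
  intro τ hτ
  by_contra hnz
  have h1 : s.repr (s nu * s mu) τ ≠ 0 := by
    rw [mul_comm]
    exact hnz
  have := Gr_basis s hone hPieri P hP nu mu τ h1
  exact hτ (mem_diagramsOfSize.mpr (by omega))

end Algebraic6


/-- Product rule for the operators `ξ^ν`: `ξ^ν ∘ ξ^μ = Σ_λ c^λ_{μ,ν} ξ^λ`, where
`c^λ_{μ,ν}` are the Littlewood–Richardson coefficients. -/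
theorem xiNu_product
    {L : Type*} [CommRing L] [Algebra ℚ L]
    (s : Module.Basis YoungDiagram ℚ L)
    (hone : s (⊥ : YoungDiagram) = 1)
    (hPieri : ∀ (k : ℕ) (lam mu : YoungDiagram),
      s.repr (s (rowYD k) * s lam) mu =
        if mu.cells.card = lam.cells.card + k ∧ IsHStrip lam mu then 1 else 0)
    (xi : Module.End ℚ L)
    (hxi : ∀ lam mu : YoungDiagram,
      s.repr (xi (s lam)) mu = if Covers mu lam then 1 else 0)
    (nabla : Module.End ℚ L)
    (hnabla : ∀ lam mu : YoungDiagram,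
      s.repr (nabla (s lam)) mu =
        if Covers mu lam then (remContent mu lam : ℚ) else 0)
    (P : YoungDiagram → MvPolynomial ℕ ℚ)
    (hP : ∀ lam : YoungDiagram,
      MvPolynomial.aeval (fun n => pSym s (n + 1)) (P lam) = s lam)
    (mu nu : YoungDiagram) :
    opEval (rhoOp xi nabla) (P nu) * opEval (rhoOp xi nabla) (P mu) =
      ∑ lam ∈ diagramsOfSize (mu.cells.card + nu.cells.card),
        s.repr (s mu * s nu) lam • opEval (rhoOp xi nabla) (P lam) := by
  classical
  have hcrux := crux s hone hPieri xi nabla hxi hnabla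
  have hAdj : ∀ lam : YoungDiagram, AdjM s (opEval (rhoOp xi nabla) (P lam)) (s lam) := by
    intro lam
    have h1 : AdjM s (opEval (rhoOp xi nabla) (P lam))
        (∑ m ∈ (P lam).support, MvPolynomial.coeff m (P lam) •
          ((m.support.sort (· ≤ ·)).map fun n => pSym s (n + 1) ^ m n).prod) := by
      rw [opEval]
      apply AdjM_sum
      intro m _
      apply AdjM_smul
      exact AdjM_listprod s hone _ _ (fun n => AdjM_pow s hone (hcrux n) (m n))
        (m.support.sort (· ≤ ·))
    have h2 := aeval_expand (fun n => pSym s (n + 1)) (P lam)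
    rw [hP lam] at h2
    rwa [← h2] at h1
  have hL : AdjM s (opEval (rhoOp xi nabla) (P nu) * opEval (rhoOp xi nabla) (P mu))
      (s mu * s nu) := by
    have h := AdjM_mul s (hAdj nu) (hAdj mu)
    rwa [mul_comm (s nu) (s mu)] at h
  have hR : AdjM s (∑ lam ∈ diagramsOfSize (mu.cells.card + nu.cells.card),
      s.repr (s mu * s nu) lam • opEval (rhoOp xi nabla) (P lam)) (s mu * s nu) := by
    have h := AdjM_sum s (diagramsOfSize (mu.cells.card + nu.cells.card))
      (fun lam => s.repr (s mu * s nu) lam • opEval (rhoOp xi nabla) (P lam))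
      (fun lam => s.repr (s mu * s nu) lam • s lam)
      (fun lam _ => AdjM_smul s _ (hAdj lam))
    rwa [← repr_expand s (s mu * s nu) _ (graded_support s hone hPieri P hP mu nu)] at h
  apply s.ext
  intro lam
  apply s.repr.injective
  ext τ
  rw [hL lam τ, hR lam τ]
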